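/- arXiv:2407.08783 — 8 statements merged into one kernel-verified Lean document; each statement's English description precedes it below -/
import Mathlib

section
/- For every finite directed graph Γ on the node set Fin n (self-loops allowed, no parallel edges) and every N ≥ 1, the normalized closed path polytope p_N(Γ) is contained in the normalized cycle polytope p_*(Γ). -/
/-- `s : ZMod N → V` is a closed path of length `N` in the directed graph `Γ`:
every consecutive pair of nodes is an edge of `Γ`. -/
def IsClosedPath {V : Type*} (Γ : V → V → Prop) (N : ℕ) (s : ZMod N → V) : Prop :=
  ∀ i : ZMod N, Γ (s i) (s (i + 1))

/-- A simple cycle of length `k` in `Γ`: a closed path of positive length with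
pairwise distinct nodes. -/
def IsSimpleCycle {V : Type*} (Γ : V → V → Prop) (k : ℕ) (c : ZMod k → V) : Prop :=
  0 < k ∧ IsClosedPath Γ k c ∧ Function.Injective c

/-- The weight matrix `W(s)` of `s : ZMod N → Fin n`: its `(i,j)` entry counts the
number of indices `k` with `(s k, s (k+1)) = (i, j)`. -/
noncomputable def weightMatrix {n : ℕ} (N : ℕ) (s : ZMod N → Fin n) :
    Matrix (Fin n) (Fin n) ℝ :=
  Matrix.of fun i j => (Nat.card {k : ZMod N // s k = i ∧ s (k + 1) = j} : ℝ)

/-- The normalized closed path polytope `p_N(Γ)`: the convex hull of the normalized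
weight matrices `w(s) = W(s)/N` of all closed paths of length `N` in `Γ`. -/
noncomputable def pathPolytope {n : ℕ} (Γ : Fin n → Fin n → Prop) (N : ℕ) :
    Set (Matrix (Fin n) (Fin n) ℝ) :=
  convexHull ℝ
    {M | ∃ s : ZMod N → Fin n, IsClosedPath Γ N s ∧ M = (N : ℝ)⁻¹ • weightMatrix N s}

/-- The normalized cycle polytope `p_*(Γ)`: the convex hull of the normalized weight
matrices `w(c) = W(c)/ℓ(c)` of all simple cycles of `Γ`. -/
noncomputable def cyclePolytope {n : ℕ} (Γ : Fin n → Fin n → Prop) :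
    Set (Matrix (Fin n) (Fin n) ℝ) :=
  convexHull ℝ
    {M | ∃ (k : ℕ) (c : ZMod k → Fin n), IsSimpleCycle Γ k c ∧
      M = (k : ℝ)⁻¹ • weightMatrix k c}

/-- Shift lemma: evaluating a segment of `s` at the successor index. -/
lemma seg_succ' {V : Type*} {N : ℕ} [NeZero N] (s : ZMod N → V) (a : ZMod N) (d : ℕ)
    (hd : 0 < d) (hwrap : s (a + (d : ZMod N)) = s a) (i : ZMod d) :
    s (a + (((i + 1 : ZMod d).val : ℕ) : ZMod N)) = s (a + ((i.val : ℕ) : ZMod N) + 1) := by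
  haveI : NeZero d := ⟨hd.ne'⟩
  by_cases h : i.val + 1 < d
  · have h1 : (1 : ZMod d).val = 1 := by
      have h2 : (1 : ℕ) < d := by omega
      simpa using ZMod.val_cast_of_lt h2
    have hv : (i + 1 : ZMod d).val = i.val + 1 := by
      rw [ZMod.val_add, h1, Nat.mod_eq_of_lt h]
    rw [hv]
    congr 1
    push_cast
    ring
  · have h2 : i.val + 1 = d := by have := ZMod.val_lt i; omega
    have hv : (i + 1 : ZMod d) = 0 := by
      have e1 : ((i.val + 1 : ℕ) : ZMod d) = 0 := by rw [h2]; exact ZMod.natCast_self d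
      have e2 : ((i.val : ℕ) : ZMod d) = i := ZMod.natCast_rightInverse i
      push_cast at e1
      rwa [e2] at e1
    have hr : a + ((i.val : ℕ) : ZMod N) + 1 = a + ((d : ℕ) : ZMod N) := by
      have e3 : ((d : ℕ) : ZMod N) = ((i.val + 1 : ℕ) : ZMod N) := by rw [h2]
      rw [e3]; push_cast; ring
    rw [hv, hr, hwrap]
    simp [ZMod.val_zero]

/-- Counting lemma: the number of indices with a given property, as a sum over a range,
starting at an arbitrary base point `a`. -/
lemma card_eq_sum' {V : Type*} [DecidableEq V] {N : ℕ} [NeZero N] (s : ZMod N → V)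
    (a : ZMod N) (i j : V) :
    Nat.card {k : ZMod N // s k = i ∧ s (k + 1) = j}
      = ∑ t ∈ Finset.range N,
          if s (a + (t : ZMod N)) = i ∧ s (a + (t : ZMod N) + 1) = j then 1 else 0 := by
  classical
  rw [Nat.card_eq_fintype_card, Fintype.card_subtype, Finset.card_filter]
  have hbij : Function.Bijective (fun t : Fin N => a + ((t : ℕ) : ZMod N)) := by
    rw [Fintype.bijective_iff_injective_and_card]
    constructor
    · intro t u h
      simp only [add_right_injective] at h
      have h2 : (((t : ℕ) : ZMod N)) = ((u : ℕ) : ZMod N) := by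
        exact add_left_cancel h
      have := congrArg ZMod.val h2
      rw [ZMod.val_cast_of_lt t.isLt, ZMod.val_cast_of_lt u.isLt] at this
      exact Fin.ext this
    · simp [ZMod.card]
  have := Fintype.sum_bijective _ hbij
    (fun t : Fin N => if s (a + ((t : ℕ) : ZMod N)) = i ∧ s (a + ((t : ℕ) : ZMod N) + 1) = j then (1:ℕ) else 0)
    (fun k : ZMod N => if s k = i ∧ s (k + 1) = j then (1:ℕ) else 0)
    (fun t => rfl)
  rw [← this]
  exact Fin.sum_univ_eq_sum_range (fun t : ℕ => if s (a + (t : ZMod N)) = i ∧ s (a + (t : ZMod N) + 1) = j then (1:ℕ) else 0) N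

/-- Splitting the weight matrix of a closed walk at a repeated vertex. -/
lemma weight_split' {n N : ℕ} [NeZero N] (s : ZMod N → Fin n) (a : ZMod N) (d : ℕ)
    (hd : 0 < d) (hdN : d < N) (hwrap : s (a + (d : ZMod N)) = s a) :
    weightMatrix N s
      = weightMatrix d (fun k : ZMod d => s (a + ((k.val : ℕ) : ZMod N)))
        + weightMatrix (N - d)
            (fun k : ZMod (N - d) => s (a + (d : ZMod N) + ((k.val : ℕ) : ZMod N))) := by
  haveI : NeZero d := ⟨hd.ne'⟩
  haveI : NeZero (N - d) := ⟨by omega⟩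
  have hwrap2 : s (a + (d : ZMod N) + ((N - d : ℕ) : ZMod N)) = s (a + (d : ZMod N)) := by
    have h1 : ((d : ℕ) : ZMod N) + ((N - d : ℕ) : ZMod N) = ((N : ℕ) : ZMod N) := by
      rw [← Nat.cast_add]; congr 1; omega
    have h2 : a + (d : ZMod N) + ((N - d : ℕ) : ZMod N) = a := by
      rw [add_assoc, h1, ZMod.natCast_self, add_zero]
    rw [h2, hwrap]
  ext i j
  simp only [weightMatrix, Matrix.add_apply, Matrix.of_apply]
  rw [← Nat.cast_add]
  congr 1
  rw [card_eq_sum' s a i j,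
      card_eq_sum' (fun k : ZMod d => s (a + ((k.val : ℕ) : ZMod N))) 0 i j,
      card_eq_sum' (fun k : ZMod (N - d) => s (a + (d : ZMod N) + ((k.val : ℕ) : ZMod N))) 0 i j,
      ← Finset.sum_range_add_sum_Ico _ hdN.le]
  congr 1
  · apply Finset.sum_congr rfl
    intro t ht
    rw [Finset.mem_range] at ht
    have ha1 : s (a + ((((0 : ZMod d) + (t : ZMod d)).val : ℕ) : ZMod N))
        = s (a + ((t : ℕ) : ZMod N)) := by
      rw [zero_add, ZMod.val_cast_of_lt ht]
    have ha2 : s (a + ((((0 : ZMod d) + (t : ZMod d) + 1).val : ℕ) : ZMod N))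
        = s (a + ((t : ℕ) : ZMod N) + 1) := by
      rw [zero_add, seg_succ' s a d hd hwrap ((t : ℕ) : ZMod d), ZMod.val_cast_of_lt ht]
    simp only [ha1, ha2]
  · rw [Finset.sum_Ico_eq_sum_range]
    apply Finset.sum_congr rfl
    intro t ht
    rw [Finset.mem_range] at ht
    have harg : a + (d : ZMod N) + ((t : ℕ) : ZMod N) = a + ((d + t : ℕ) : ZMod N) := by
      push_cast; ring
    have hb1 : s (a + (d : ZMod N) + ((((0 : ZMod (N - d)) + (t : ZMod (N - d))).val : ℕ) : ZMod N))
        = s (a + ((d + t : ℕ) : ZMod N)) := by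
      rw [zero_add, ZMod.val_cast_of_lt ht, harg]
    have hb2 : s (a + (d : ZMod N)
          + ((((0 : ZMod (N - d)) + (t : ZMod (N - d)) + 1).val : ℕ) : ZMod N))
        = s (a + ((d + t : ℕ) : ZMod N) + 1) := by
      rw [zero_add, seg_succ' s (a + (d : ZMod N)) (N - d) (by omega) hwrap2 ((t : ℕ) : ZMod (N - d)),
          ZMod.val_cast_of_lt ht, harg]
    simp only [hb1, hb2]

lemma key_mem_cyclePolytope {n : ℕ} (Γ : Fin n → Fin n → Prop) :
    ∀ N : ℕ, 0 < N → ∀ s : ZMod N → Fin n, IsClosedPath Γ N s →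
      (N : ℝ)⁻¹ • weightMatrix N s ∈ cyclePolytope Γ := by
  intro N
  induction N using Nat.strong_induction_on with
  | _ N IH =>
    intro hN s hs
    haveI : NeZero N := ⟨hN.ne'⟩
    by_cases hinj : Function.Injective s
    · exact subset_convexHull ℝ _ ⟨N, s, ⟨hN, hs, hinj⟩, rfl⟩
    · rw [Function.not_injective_iff] at hinj
      obtain ⟨b, a, hab, hne⟩ := hinj
      set d : ℕ := (b - a).val with hd_def
      have hd : 0 < d := by
        rcases Nat.eq_zero_or_pos d with h | h
        · exfalso; exact hne (by rwa [ZMod.val_eq_zero, sub_eq_zero] at h)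
        · exact h
      have hdN : d < N := ZMod.val_lt (b - a)
      have hcast : ((d : ℕ) : ZMod N) = b - a := ZMod.natCast_rightInverse (b - a)
      have hwrap : s (a + (d : ZMod N)) = s a := by
        rw [hcast]; rw [add_sub_cancel]; exact hab
      haveI : NeZero d := ⟨hd.ne'⟩
      haveI : NeZero (N - d) := ⟨by omega⟩
      set s1 : ZMod d → Fin n := fun k => s (a + ((k.val : ℕ) : ZMod N)) with hs1
      set s2 : ZMod (N - d) → Fin n :=
        fun k => s (a + (d : ZMod N) + ((k.val : ℕ) : ZMod N)) with hs2
      have hwrap2 : s (a + (d : ZMod N) + ((N - d : ℕ) : ZMod N)) = s (a + (d : ZMod N)) := by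
        have h1 : ((d : ℕ) : ZMod N) + ((N - d : ℕ) : ZMod N) = ((N : ℕ) : ZMod N) := by
          rw [← Nat.cast_add]; congr 1; omega
        have h2 : a + (d : ZMod N) + ((N - d : ℕ) : ZMod N) = a := by
          rw [add_assoc, h1, ZMod.natCast_self, add_zero]
        rw [h2, hwrap]
      have hc1 : IsClosedPath Γ d s1 := by
        intro k
        have := seg_succ' s a d hd hwrap k
        show Γ (s (a + ((k.val : ℕ) : ZMod N))) (s (a + (((k + 1 : ZMod d).val : ℕ) : ZMod N)))
        rw [this]
        exact hs (a + ((k.val : ℕ) : ZMod N))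
      have hc2 : IsClosedPath Γ (N - d) s2 := by
        intro k
        have := seg_succ' s (a + (d : ZMod N)) (N - d) (by omega) hwrap2 k
        show Γ (s (a + (d : ZMod N) + ((k.val : ℕ) : ZMod N)))
          (s (a + (d : ZMod N) + (((k + 1 : ZMod (N - d)).val : ℕ) : ZMod N)))
        rw [this]
        exact hs (a + (d : ZMod N) + ((k.val : ℕ) : ZMod N))
      have h1 : (d : ℝ)⁻¹ • weightMatrix d s1 ∈ cyclePolytope Γ := IH d hdN hd s1 hc1
      have h2 : ((N - d : ℕ) : ℝ)⁻¹ • weightMatrix (N - d) s2 ∈ cyclePolytope Γ :=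
        IH (N - d) (by omega) (by omega) s2 hc2
      have hsplit := weight_split' s a d hd hdN hwrap
      have hθ1 : (0 : ℝ) ≤ (d : ℝ) / N := by positivity
      have hθ2 : (0 : ℝ) ≤ ((N - d : ℕ) : ℝ) / N := by positivity
      have hNne : (N : ℝ) ≠ 0 := Nat.cast_ne_zero.mpr hN.ne'
      have hdne : (d : ℝ) ≠ 0 := Nat.cast_ne_zero.mpr hd.ne'
      have hNdne : ((N - d : ℕ) : ℝ) ≠ 0 := Nat.cast_ne_zero.mpr (by omega)
      have hsum : (d : ℝ) / N + ((N - d : ℕ) : ℝ) / N = 1 := by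
        rw [← add_div, div_eq_one_iff_eq hNne]
        push_cast [Nat.cast_sub hdN.le]
        ring
      have hconv := (convex_convexHull ℝ _) h1 h2 hθ1 hθ2 hsum
      have heq : ((d : ℝ) / N) • ((d : ℝ)⁻¹ • weightMatrix d s1)
          + (((N - d : ℕ) : ℝ) / N) • (((N - d : ℕ) : ℝ)⁻¹ • weightMatrix (N - d) s2)
          = (N : ℝ)⁻¹ • weightMatrix N s := by
        rw [hsplit, smul_add, smul_smul, smul_smul]
        congr 2
        · field_simp
        · field_simp
      rwa [heq] at hconv

/-- for every finite directed graph `Γ` on `Fin n` and every `N ≥ 1`,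
the normalized closed path polytope `p_N(Γ)` is contained in the normalized cycle
polytope `p_*(Γ)`. -/
theorem pathPolytope_subset_cyclePolytope {n : ℕ} (Γ : Fin n → Fin n → Prop)
    (N : ℕ) (hN : 1 ≤ N) :
    pathPolytope Γ N ⊆ cyclePolytope Γ := by
  apply convexHull_min ?_ ?_
  · rintro M ⟨s, hsp, rfl⟩
    exact key_mem_cyclePolytope Γ N hN s hsp
  · exact convex_convexHull ℝ _
end

section
/- For every finite directed graph Γ on Fin n, the set of extreme points of the normalized cycle polytope p_*(Γ) is exactly the set {w(c) : c ∈ 𝒞(Γ)} of normalized weight matrices of simple cycles of Γ; in particular, the normalized weight matrix of a simple cycle is never a convex combination of normalized weight matrices of other simple cycles. -/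
/-- Two (cyclically indexed) tuples of nodes are rotation-equivalent if they have
the same length and one is a cyclic rotation of the other.  This is the
identification used for simple cycles. -/
def RotEquiv {V : Type*} (p q : Σ k : ℕ, ZMod k → V) : Prop :=
  ∃ h : p.1 = q.1, ∃ r : ZMod q.1,
    ∀ i : ZMod q.1, q.2 i = p.2 (cast (congrArg ZMod h.symm) (i + r))

open Finset

noncomputable def cyclF {n : ℕ} (k : ℕ) [NeZero k] (c : ZMod k → Fin n) :
    Matrix (Fin n) (Fin n) ℝ →ₗ[ℝ] ℝ where
  toFun M := ∑ m : ZMod k, M (c m) (c (m + 1))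
  map_add' M N := by simp [Matrix.add_apply, Finset.sum_add_distrib]
  map_smul' r M := by simp [Matrix.smul_apply, Finset.mul_sum, smul_eq_mul]

lemma weight_entry {n : ℕ} (N : ℕ) [NeZero N] (s : ZMod N → Fin n) (i j : Fin n) :
    weightMatrix N s i j
      = ((Finset.univ.filter (fun t : ZMod N => s t = i ∧ s (t + 1) = j)).card : ℝ) := by
  classical
  simp only [weightMatrix, Matrix.of_apply]
  rw [Nat.card_eq_fintype_card, Fintype.card_subtype]

lemma cyclF_weight {n : ℕ} (k : ℕ) [NeZero k] (c : ZMod k → Fin n)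
    (hcinj : Function.Injective c) (N : ℕ) [NeZero N] (s : ZMod N → Fin n) :
    cyclF k c (weightMatrix N s)
      = ((Finset.univ.filter
          (fun t : ZMod N => ∃ m, s t = c m ∧ s (t + 1) = c (m + 1))).card : ℝ) := by
  classical
  have hb : ((Finset.univ : Finset (ZMod k)).biUnion
        (fun m => Finset.univ.filter (fun t : ZMod N => s t = c m ∧ s (t + 1) = c (m + 1))))
      = Finset.univ.filter (fun t : ZMod N => ∃ m, s t = c m ∧ s (t + 1) = c (m + 1)) := by
    ext t; simp
  have hdisj : ∀ m1 ∈ (univ : Finset (ZMod k)), ∀ m2 ∈ univ, m1 ≠ m2 →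
      Disjoint (univ.filter (fun t : ZMod N => s t = c m1 ∧ s (t + 1) = c (m1 + 1)))
        (univ.filter (fun t : ZMod N => s t = c m2 ∧ s (t + 1) = c (m2 + 1))) := by
    intro m1 _ m2 _ hne
    rw [Finset.disjoint_left]
    intro t ht1 ht2
    simp only [mem_filter] at ht1 ht2
    exact hne (hcinj (ht1.2.1.symm.trans ht2.2.1))
  calc cyclF k c (weightMatrix N s)
      = ∑ m : ZMod k,
          ((univ.filter (fun t : ZMod N => s t = c m ∧ s (t + 1) = c (m + 1))).card : ℝ) := by
        simp only [cyclF, LinearMap.coe_mk, AddHom.coe_mk]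
        exact Finset.sum_congr rfl fun m _ => weight_entry N s _ _
    _ = (((univ : Finset (ZMod k)).biUnion
          (fun m => univ.filter (fun t : ZMod N => s t = c m ∧ s (t + 1) = c (m + 1)))).card : ℝ) := by
        rw [Finset.card_biUnion hdisj]; push_cast; rfl
    _ = _ := by rw [hb]

lemma rot_of_edges {n : ℕ} {k k' : ℕ} {c : ZMod k → Fin n} {c' : ZMod k' → Fin n}
    (hk : 0 < k) (hk' : 0 < k')
    (hcinj : Function.Injective c) (hc'inj : Function.Injective c')
    (hE : ∀ t : ZMod k', ∃ m : ZMod k, c' t = c m ∧ c' (t + 1) = c (m + 1)) :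
    ∃ h : k = k', ∃ r : ZMod k',
      ∀ i : ZMod k', c' i = c (cast (congrArg ZMod h.symm) (i + r)) := by
  haveI : NeZero k := ⟨hk.ne'⟩
  haveI : NeZero k' := ⟨hk'.ne'⟩
  have step : ∀ (t : ZMod k') (m : ZMod k), c' t = c m → c' (t + 1) = c (m + 1) := by
    intro t m h
    obtain ⟨m', h1, h2⟩ := hE t
    have : m' = m := hcinj (h1.symm.trans h)
    rw [h2, this]
  obtain ⟨m₀, hm₀, -⟩ := hE 0
  have key : ∀ t : ℕ, c' (t : ZMod k') = c (m₀ + (t : ZMod k)) := by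
    intro t
    induction t with
    | zero => simpa using hm₀
    | succ t ih =>
      have := step (t : ZMod k') (m₀ + (t : ZMod k)) ih
      push_cast
      rw [← add_assoc]
      exact this
  have hdvd : k ∣ k' := by
    have h1 : c' ((k' : ZMod k')) = c (m₀ + (k' : ZMod k)) := key k'
    rw [ZMod.natCast_self] at h1
    have h2 : c (m₀ + (k' : ZMod k)) = c (m₀ + 0) := by
      rw [add_zero, ← hm₀, ← h1]
    have := hcinj h2
    have h3 : (k' : ZMod k) = 0 := by
      have := add_left_cancel this
      simpa using this
    exact (ZMod.natCast_eq_zero_iff _ _).mp h3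
  have hle : k' ≤ k := by
    have hinj : Function.Injective (fun t : ZMod k' => Classical.choose (hE t)) := by
      intro t1 t2 h12
      apply hc'inj
      have e1 := (Classical.choose_spec (hE t1)).1
      have e2 := (Classical.choose_spec (hE t2)).1
      rw [e1, e2]
      exact congrArg c h12
    have := Fintype.card_le_of_injective _ hinj
    simpa [ZMod.card] using this
  have hkk : k = k' := le_antisymm (Nat.le_of_dvd hk' hdvd) hle
  subst hkk
  refine ⟨rfl, m₀, fun i => ?_⟩
  have h1 : c' ((i.val : ZMod k)) = c (m₀ + (i.val : ZMod k)) := key i.val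
  rw [ZMod.natCast_val, ZMod.cast_id] at h1
  simpa [add_comm] using h1

lemma weight_rot {n : ℕ} {k : ℕ} (c c' : ZMod k → Fin n) (r : ZMod k)
    (h : ∀ i, c' i = c (i + r)) : weightMatrix k c' = weightMatrix k c := by
  ext i j
  simp only [weightMatrix, Matrix.of_apply]
  congr 1
  apply Nat.card_congr
  refine Equiv.subtypeEquiv (Equiv.addRight r) (fun m => ?_)
  simp only [Equiv.coe_addRight, h]
  rw [add_right_comm]

lemma cyclF_self {n k : ℕ} [NeZero k] (c : ZMod k → Fin n) (hcinj : Function.Injective c) :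
    cyclF k c ((k : ℝ)⁻¹ • weightMatrix k c) = 1 := by
  classical
  rw [map_smul, smul_eq_mul, cyclF_weight k c hcinj k c]
  have huniv : (univ.filter (fun t : ZMod k => ∃ m, c t = c m ∧ c (t + 1) = c (m + 1))) = univ := by
    apply Finset.eq_univ_of_forall
    intro t
    simp only [mem_filter, mem_univ, true_and]
    exact ⟨t, rfl, rfl⟩
  rw [huniv, Finset.card_univ, ZMod.card]
  exact inv_mul_cancel₀ (Nat.cast_ne_zero.mpr (NeZero.ne k))

lemma cyclF_on_cycle {n k k' : ℕ} [NeZero k] [NeZero k']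
    {c : ZMod k → Fin n} {c' : ZMod k' → Fin n}
    (hcinj : Function.Injective c) (hc'inj : Function.Injective c') :
    cyclF k c ((k' : ℝ)⁻¹ • weightMatrix k' c') ≤ 1 ∧
    (cyclF k c ((k' : ℝ)⁻¹ • weightMatrix k' c') = 1 →
      RotEquiv (⟨k, c⟩ : Σ m, ZMod m → Fin n) ⟨k', c'⟩ ∧
        (k' : ℝ)⁻¹ • weightMatrix k' c' = (k : ℝ)⁻¹ • weightMatrix k c) ∧
    (¬ RotEquiv (⟨k, c⟩ : Σ m, ZMod m → Fin n) ⟨k', c'⟩ →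
      cyclF k c ((k' : ℝ)⁻¹ • weightMatrix k' c') ≤ 1 - (k' : ℝ)⁻¹) := by
  classical
  have hk'pos : (0 : ℝ) < k' := by
    exact_mod_cast Nat.pos_of_ne_zero (NeZero.ne k')
  set cnt := (univ.filter
      (fun t : ZMod k' => ∃ m, c' t = c m ∧ c' (t + 1) = c (m + 1))).card with hcntdef
  have hval : cyclF k c ((k' : ℝ)⁻¹ • weightMatrix k' c') = (k' : ℝ)⁻¹ * cnt := by
    rw [map_smul, smul_eq_mul, cyclF_weight k c hcinj k' c']
  have hcntle : cnt ≤ k' := by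
    have := Finset.card_filter_le (univ : Finset (ZMod k'))
      (fun t : ZMod k' => ∃ m, c' t = c m ∧ c' (t + 1) = c (m + 1))
    simpa [ZMod.card] using this
  have hmain : cnt = k' →
      RotEquiv (⟨k, c⟩ : Σ m, ZMod m → Fin n) ⟨k', c'⟩ ∧
        (k' : ℝ)⁻¹ • weightMatrix k' c' = (k : ℝ)⁻¹ • weightMatrix k c := by
    intro hcnt
    have huniv : (univ.filter
        (fun t : ZMod k' => ∃ m, c' t = c m ∧ c' (t + 1) = c (m + 1))) = univ := by
      apply Finset.eq_univ_of_card
      rw [← hcntdef, hcnt, ZMod.card]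
    have hE : ∀ t : ZMod k', ∃ m : ZMod k, c' t = c m ∧ c' (t + 1) = c (m + 1) := by
      intro t
      have := huniv ▸ (Finset.mem_univ t)
      simpa using (Finset.mem_filter.mp this).2
    obtain ⟨hkk, r, hr⟩ := rot_of_edges (Nat.pos_of_ne_zero (NeZero.ne k))
      (Nat.pos_of_ne_zero (NeZero.ne k')) hcinj hc'inj hE
    refine ⟨⟨hkk, r, hr⟩, ?_⟩
    subst hkk
    have hr' : ∀ i : ZMod k, c' i = c (i + r) := fun i => hr i
    rw [weight_rot c c' r hr']
  refine ⟨?_, ?_, ?_⟩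
  · rw [hval]
    calc (k' : ℝ)⁻¹ * cnt ≤ (k' : ℝ)⁻¹ * k' := by
          apply mul_le_mul_of_nonneg_left _ (inv_nonneg.mpr hk'pos.le)
          exact_mod_cast hcntle
      _ = 1 := inv_mul_cancel₀ hk'pos.ne'
  · intro h1
    rw [hval] at h1
    field_simp at h1
    exact hmain (by exact_mod_cast h1)
  · intro hnrot
    have hne : cnt ≠ k' := fun h => hnrot (hmain h).1
    have hlt : (cnt : ℝ) ≤ (k' : ℝ) - 1 := by
      have : cnt + 1 ≤ k' := Nat.succ_le_of_lt (lt_of_le_of_ne hcntle hne)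
      have := (Nat.cast_le (α := ℝ)).mpr this
      push_cast at this
      linarith
    rw [hval]
    have := mul_le_mul_of_nonneg_left hlt (inv_nonneg.mpr hk'pos.le)
    calc (k' : ℝ)⁻¹ * cnt ≤ (k' : ℝ)⁻¹ * ((k' : ℝ) - 1) := this
      _ = 1 - (k' : ℝ)⁻¹ := by
          rw [mul_sub, mul_one, inv_mul_cancel₀ hk'pos.ne']



/-- the set of extreme points of the normalized cycle polytope `p_*(Γ)`
is exactly the set of normalized weight matrices of simple cycles of `Γ`; in
particular, the normalized weight matrix of a simple cycle is never a convex
combination of normalized weight matrices of other simple cycles (cycles that are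
not a cyclic rotation of it). -/
theorem extremePoints_cyclePolytope {n : ℕ} (Γ : Fin n → Fin n → Prop) :
    (Set.extremePoints ℝ (cyclePolytope Γ) =
      {M | ∃ (k : ℕ) (c : ZMod k → Fin n), IsSimpleCycle Γ k c ∧
        M = (k : ℝ)⁻¹ • weightMatrix k c}) ∧
    ∀ (k : ℕ) (c : ZMod k → Fin n), IsSimpleCycle Γ k c →
      (k : ℝ)⁻¹ • weightMatrix k c ∉
        convexHull ℝ
          {M | ∃ (k' : ℕ) (c' : ZMod k' → Fin n), IsSimpleCycle Γ k' c' ∧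
            ¬ RotEquiv ⟨k, c⟩ ⟨k', c'⟩ ∧ M = (k' : ℝ)⁻¹ • weightMatrix k' c'} := by
  classical
  set S : Set (Matrix (Fin n) (Fin n) ℝ) :=
    {M | ∃ (k : ℕ) (c : ZMod k → Fin n), IsSimpleCycle Γ k c ∧
      M = (k : ℝ)⁻¹ • weightMatrix k c} with hS
  have hface : ∀ (k : ℕ) [NeZero k] (c : ZMod k → Fin n), IsSimpleCycle Γ k c →
      ∀ x ∈ convexHull ℝ S, cyclF k c x = 1 → x = (k : ℝ)⁻¹ • weightMatrix k c := by
    intro k _inst c hc x hx hfx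
    haveI : NeZero k := ⟨hc.1.ne'⟩
    rw [_root_.convexHull_eq] at hx
    obtain ⟨ι, t, wt, z, hw0, hw1, hzS, hcm⟩ := hx
    rw [Finset.centerMass_eq_of_sum_1 _ _ hw1] at hcm
    have hfz : ∀ i ∈ t, cyclF k c (z i) ≤ 1 ∧
        (cyclF k c (z i) = 1 → z i = (k : ℝ)⁻¹ • weightMatrix k c) := by
      intro i hi
      obtain ⟨k', c', hc', hz⟩ := hzS i hi
      haveI : NeZero k' := ⟨hc'.1.ne'⟩
      obtain ⟨hle, heq, -⟩ := cyclF_on_cycle hc.2.2 hc'.2.2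
      rw [hz]
      exact ⟨hle, fun h => (heq h).2⟩
    have hsum : ∑ i ∈ t, wt i * (1 - cyclF k c (z i)) = 0 := by
      have h1 : cyclF k c x = ∑ i ∈ t, wt i * cyclF k c (z i) := by
        rw [← hcm, map_sum]
        simp [map_smul, smul_eq_mul]
      have h2 : ∑ i ∈ t, wt i * (1 - cyclF k c (z i))
          = (∑ i ∈ t, wt i) - ∑ i ∈ t, wt i * cyclF k c (z i) := by
        rw [← Finset.sum_sub_distrib]
        exact Finset.sum_congr rfl fun i _ => by ring
      rw [h2, hw1, ← h1, hfx, sub_self]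
    have hzero : ∀ i ∈ t, wt i * (1 - cyclF k c (z i)) = 0 :=
      (Finset.sum_eq_zero_iff_of_nonneg (fun i hi =>
        mul_nonneg (hw0 i hi) (by linarith [(hfz i hi).1]))).mp hsum
    have hterm : ∀ i ∈ t, wt i • z i = wt i • ((k : ℝ)⁻¹ • weightMatrix k c) := by
      intro i hi
      rcases mul_eq_zero.mp (hzero i hi) with h | h
      · rw [h, zero_smul, zero_smul]
      · have h1 : cyclF k c (z i) = 1 := by linarith
        rw [(hfz i hi).2 h1]
    calc x = ∑ i ∈ t, wt i • z i := hcm.symm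
      _ = ∑ i ∈ t, wt i • ((k : ℝ)⁻¹ • weightMatrix k c) := Finset.sum_congr rfl hterm
      _ = (∑ i ∈ t, wt i) • ((k : ℝ)⁻¹ • weightMatrix k c) := by rw [Finset.sum_smul]
      _ = (k : ℝ)⁻¹ • weightMatrix k c := by rw [hw1, one_smul]
  have hbound : ∀ (k : ℕ) [NeZero k] (c : ZMod k → Fin n), IsSimpleCycle Γ k c →
      ∀ x ∈ convexHull ℝ S, cyclF k c x ≤ 1 := by
    intro k _inst c hc x hx
    haveI : NeZero k := ⟨hc.1.ne'⟩
    have hconv : Convex ℝ {M : Matrix (Fin n) (Fin n) ℝ | cyclF k c M ≤ 1} :=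
      convex_halfSpace_le (LinearMap.isLinear _) 1
    have hsub : S ⊆ {M | cyclF k c M ≤ 1} := by
      rintro M ⟨k', c', hc', rfl⟩
      haveI : NeZero k' := ⟨hc'.1.ne'⟩
      exact (cyclF_on_cycle hc.2.2 hc'.2.2).1
    exact convexHull_min hsub hconv hx
  have hext : ∀ M ∈ S, M ∈ Set.extremePoints ℝ (convexHull ℝ S) := by
    rintro M ⟨k, c, hc, rfl⟩
    haveI : NeZero k := ⟨hc.1.ne'⟩
    refine ⟨subset_convexHull ℝ S ⟨k, c, hc, rfl⟩, ?_⟩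
    intro x1 hx1 x2 hx2 hseg
    obtain ⟨a, b, ha, hb, hab, hx⟩ := hseg
    have h1 : cyclF k c x1 ≤ 1 := hbound k c hc x1 hx1
    have h2 : cyclF k c x2 ≤ 1 := hbound k c hc x2 hx2
    have hfw : cyclF k c ((k : ℝ)⁻¹ • weightMatrix k c) = 1 := cyclF_self c hc.2.2
    rw [← hx] at hfw
    have hsum : a * cyclF k c x1 + b * cyclF k c x2 = 1 := by
      simpa [map_add, map_smul, smul_eq_mul] using hfw
    have hf1 : cyclF k c x1 = 1 := le_antisymm h1 (by nlinarith)
    have hf2 : cyclF k c x2 = 1 := le_antisymm h2 (by nlinarith)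
    exact hface k c hc x1 hx1 hf1
  constructor
  · show Set.extremePoints ℝ (convexHull ℝ S) = S
    exact Set.Subset.antisymm extremePoints_convexHull_subset hext
  · intro k c hc hmem
    haveI : NeZero k := ⟨hc.1.ne'⟩
    have hn : 0 < n := (c 0).pos
    have hninv : (0 : ℝ) < (n : ℝ)⁻¹ := by positivity
    have hsub : {M | ∃ (k' : ℕ) (c' : ZMod k' → Fin n), IsSimpleCycle Γ k' c' ∧
          ¬ RotEquiv ⟨k, c⟩ ⟨k', c'⟩ ∧ M = (k' : ℝ)⁻¹ • weightMatrix k' c'}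
        ⊆ {M | cyclF k c M ≤ 1 - (n : ℝ)⁻¹} := by
      rintro M ⟨k', c', hc', hnrot, rfl⟩
      haveI : NeZero k' := ⟨hc'.1.ne'⟩
      have hstrict := (cyclF_on_cycle hc.2.2 hc'.2.2).2.2 hnrot
      have hk'n : k' ≤ n := by
        have := Fintype.card_le_of_injective c' hc'.2.2
        simpa [ZMod.card] using this
      have hinv : (n : ℝ)⁻¹ ≤ (k' : ℝ)⁻¹ := by
        apply inv_anti₀
        · exact_mod_cast hc'.1
        · exact_mod_cast hk'n
      have : cyclF k c ((k' : ℝ)⁻¹ • weightMatrix k' c') ≤ 1 - (n : ℝ)⁻¹ := by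
        linarith
      exact this
    have hmem2 := convexHull_min hsub
      (convex_halfSpace_le (LinearMap.isLinear _) _) hmem
    have hfw : cyclF k c ((k : ℝ)⁻¹ • weightMatrix k c) = 1 := cyclF_self c hc.2.2
    simp only [Set.mem_setOf_eq, hfw] at hmem2
    linarith
end

section
/- Let Γ be a finite directed graph on Fin n and let s be a closed path of length N in Γ. Then there exist natural numbers (a_c)_{c ∈ 𝒞(Γ)} such that W(s) = Σ_{c ∈ 𝒞(Γ)} a_c · W(c), Σ_{c ∈ 𝒞(Γ)} a_c · ℓ(c) = N, and the subgraph of Γ whose edge set is the union of the edge sets of the simple cycles c with a_c ≠ 0 is strongly connected after removing isolated nodes. -/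
section Aux
variable {n : ℕ}

lemma zc {N : ℕ} [NeZero N] (m : ZMod N) : ((m.val : ℕ) : ZMod N) = m := by
  simp [ZMod.natCast_val, ZMod.cast_id]

/-- the length-`m` sub-path of `s` starting at `i`. -/
def subPath {V : Type*} (N : ℕ) (s : ZMod N → V) (i : ZMod N) (m : ℕ) : ZMod m → V :=
  fun t => s (i + ((t.val : ℕ) : ZMod N))

lemma subPath_succ {V : Type*} {N m : ℕ} (hm : 0 < m) (s : ZMod N → V) (i : ZMod N)
    (hwrap : s (i + (m : ZMod N)) = s i) (t : ZMod m) :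
    subPath N s i m (t + 1) = s (i + ((t.val + 1 : ℕ) : ZMod N)) := by
  haveI : NeZero m := ⟨hm.ne'⟩
  have hv : (t + 1).val = (t.val + 1) % m := by
    conv_lhs => rw [← zc t]
    rw [← Nat.cast_one, ← Nat.cast_add, ZMod.val_natCast]
  by_cases h : t.val + 1 < m
  · rw [subPath, hv, Nat.mod_eq_of_lt h]
  · have h2 : t.val + 1 = m := by have := ZMod.val_lt t; omega
    rw [subPath, hv, h2, Nat.mod_self]
    push_cast
    simp [hwrap]

lemma subPath_closed {V : Type*} {Γ : V → V → Prop} {N m : ℕ} (hm : 0 < m)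
    {s : ZMod N → V} (hs : IsClosedPath Γ N s) (i : ZMod N)
    (hwrap : s (i + (m : ZMod N)) = s i) :
    IsClosedPath Γ m (subPath N s i m) := by
  intro t
  rw [subPath_succ hm s i hwrap t]
  have : s (i + ((t.val : ℕ) : ZMod N) + 1) = s (i + ((t.val + 1 : ℕ) : ZMod N)) := by
    push_cast; ring_nf
  rw [subPath, ← this]
  exact hs _

end Aux

section Split
variable {V : Type*} {N d : ℕ}

lemma wrap2 (hd0 : 0 < d) (hdN : d < N) (s : ZMod N → V) (i : ZMod N)
    (hwrap : s (i + (d : ZMod N)) = s i) :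
    s ((i + (d : ZMod N)) + ((N - d : ℕ) : ZMod N)) = s (i + (d : ZMod N)) := by
  have h1 : (d : ZMod N) + ((N - d : ℕ) : ZMod N) = 0 := by
    rw [← Nat.cast_add, Nat.add_sub_cancel' hdN.le, ZMod.natCast_self]
  rw [add_assoc, h1, add_zero, hwrap]

noncomputable def splitEquiv (hd0 : 0 < d) (hdN : d < N) (i : ZMod N) :
    ZMod N ≃ (ZMod d ⊕ ZMod (N - d)) := by
  haveI : NeZero N := ⟨(hd0.trans hdN).ne'⟩
  haveI : NeZero d := ⟨hd0.ne'⟩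
  haveI : NeZero (N - d) := ⟨(Nat.sub_pos_of_lt hdN).ne'⟩
  exact
  { toFun := fun k => if (k - i).val < d then Sum.inl (((k - i).val : ℕ) : ZMod d)
      else Sum.inr ((((k - i).val - d : ℕ) : ZMod (N - d))),
    invFun := Sum.elim (fun t => i + ((t.val : ℕ) : ZMod N))
      (fun t => i + ((d + t.val : ℕ) : ZMod N)),
    left_inv := by
      intro k
      by_cases h : (k - i).val < d
      · simp only [if_pos h, Sum.elim_inl]
        rw [ZMod.val_natCast, Nat.mod_eq_of_lt h, zc (k - i)]
        exact add_sub_cancel i k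
      · simp only [if_neg h, Sum.elim_inr]
        push_neg at h
        have hlt : (k - i).val - d < N - d := by
          have := ZMod.val_lt (k - i); omega
        rw [ZMod.val_natCast, Nat.mod_eq_of_lt hlt, Nat.add_sub_cancel' h, zc (k - i)]
        exact add_sub_cancel i k,
    right_inv := by
      intro u
      rcases u with t | t
      · simp only [Sum.elim_inl]
        have hv : ((i + ((t.val : ℕ) : ZMod N)) - i).val = t.val := by
          rw [add_sub_cancel_left, ZMod.val_natCast,
            Nat.mod_eq_of_lt ((ZMod.val_lt t).trans hdN)]
        simp only [hv]
        rw [if_pos (ZMod.val_lt t), zc t]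
      · simp only [Sum.elim_inr]
        have hlt : d + t.val < N := by have := ZMod.val_lt t; omega
        have hv : ((i + ((d + t.val : ℕ) : ZMod N)) - i).val = d + t.val := by
          rw [add_sub_cancel_left, ZMod.val_natCast, Nat.mod_eq_of_lt hlt]
        simp only [hv]
        rw [if_neg (by omega)]
        congr 1
        rw [Nat.add_sub_cancel_left, zc t] }

lemma card_split (hd0 : 0 < d) (hdN : d < N)
    (s : ZMod N → V) (i : ZMod N) (hwrap : s (i + (d : ZMod N)) = s i) (x y : V) :
    Nat.card {k : ZMod N // s k = x ∧ s (k + 1) = y} =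
      Nat.card {t : ZMod d // subPath N s i d t = x ∧ subPath N s i d (t + 1) = y} +
      Nat.card {t : ZMod (N - d) // subPath N s (i + (d : ZMod N)) (N - d) t = x ∧
        subPath N s (i + (d : ZMod N)) (N - d) (t + 1) = y} := by
  haveI : NeZero N := ⟨(hd0.trans hdN).ne'⟩
  haveI : NeZero d := ⟨hd0.ne'⟩
  haveI : NeZero (N - d) := ⟨(Nat.sub_pos_of_lt hdN).ne'⟩
  set e := splitEquiv hd0 hdN i with he
  have hNd0 : 0 < N - d := Nat.sub_pos_of_lt hdN
  set P : ZMod N → Prop := fun k => s k = x ∧ s (k + 1) = y with hP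
  have e1 : {k : ZMod N // P k} ≃ {u : ZMod d ⊕ ZMod (N - d) // P (e.symm u)} :=
    e.subtypeEquiv (fun k => by rw [Equiv.symm_apply_apply])
  have e2 : {u : ZMod d ⊕ ZMod (N - d) // P (e.symm u)} ≃
      {t : ZMod d // P (e.symm (Sum.inl t))} ⊕ {t : ZMod (N - d) // P (e.symm (Sum.inr t))} :=
    Equiv.subtypeSum
  have hsymm1 : ∀ t : ZMod d, e.symm (Sum.inl t) = i + ((t.val : ℕ) : ZMod N) := fun t => rfl
  have hsymm2 : ∀ t : ZMod (N - d),
      e.symm (Sum.inr t) = i + ((d + t.val : ℕ) : ZMod N) := fun t => rfl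
  have h1 : ∀ t : ZMod d, P (e.symm (Sum.inl t)) ↔
      (subPath N s i d t = x ∧ subPath N s i d (t + 1) = y) := by
    intro t
    rw [hsymm1, hP]
    constructor <;> rintro ⟨hx, hy⟩ <;> refine ⟨hx, ?_⟩
    · rw [subPath_succ hd0 s i hwrap t]
      rw [← hy]; congr 1; push_cast; ring
    · rw [subPath_succ hd0 s i hwrap t] at hy
      rw [← hy]; congr 1; push_cast; ring
  have h2 : ∀ t : ZMod (N - d), P (e.symm (Sum.inr t)) ↔
      (subPath N s (i + (d : ZMod N)) (N - d) t = x ∧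
        subPath N s (i + (d : ZMod N)) (N - d) (t + 1) = y) := by
    intro t
    rw [hsymm2, hP]
    have hb : i + ((d + t.val : ℕ) : ZMod N) = (i + (d : ZMod N)) + ((t.val : ℕ) : ZMod N) := by
      push_cast; ring
    constructor <;> rintro ⟨hx, hy⟩
    · refine ⟨by rw [subPath, ← hb, hx], ?_⟩
      rw [subPath_succ hNd0 s _ (wrap2 hd0 hdN s i hwrap) t, ← hy]
      congr 1; push_cast; ring
    · rw [subPath, ← hb] at hx
      refine ⟨hx, ?_⟩
      rw [subPath_succ hNd0 s _ (wrap2 hd0 hdN s i hwrap) t] at hy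
      rw [← hy]; congr 1; push_cast; ring
  calc Nat.card {k : ZMod N // P k}
      = Nat.card ({t : ZMod d // P (e.symm (Sum.inl t))} ⊕
        {t : ZMod (N - d) // P (e.symm (Sum.inr t))}) := Nat.card_congr (e1.trans e2)
    _ = Nat.card {t : ZMod d // P (e.symm (Sum.inl t))} +
        Nat.card {t : ZMod (N - d) // P (e.symm (Sum.inr t))} := Nat.card_sum
    _ = _ := by
        congr 1
        · exact Nat.card_congr (Equiv.subtypeEquivRight h1)
        · exact Nat.card_congr (Equiv.subtypeEquivRight h2)

end Split


lemma decomp {n : ℕ} (Γ : Fin n → Fin n → Prop) :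
    ∀ N, 0 < N → ∀ s : ZMod N → Fin n, IsClosedPath Γ N s →
    ∃ a : (k : ℕ) → (ZMod (k + 1) → Fin n) → ℕ,
      (∀ k c, a k c ≠ 0 → IsSimpleCycle Γ (k + 1) c) ∧
      (∀ x y : Fin n, Nat.card {m : ZMod N // s m = x ∧ s (m + 1) = y} =
        ∑ k ∈ Finset.range n, ∑ c : ZMod (k + 1) → Fin n,
          a k c * Nat.card {t : ZMod (k + 1) // c t = x ∧ c (t + 1) = y}) ∧
      ((∑ k ∈ Finset.range n, ∑ c : ZMod (k + 1) → Fin n, a k c * (k + 1)) = N) := by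
  intro N
  induction N using Nat.strong_induction_on with
  | _ N ih =>
  intro hN s hs
  classical
  by_cases hinj : Function.Injective s
  · obtain ⟨k, rfl⟩ : ∃ k, N = k + 1 := ⟨N - 1, by omega⟩
    have hkn : k < n := by
      have := Fintype.card_le_of_injective s hinj
      rw [ZMod.card, Fintype.card_fin] at this
      omega
    refine ⟨fun k' c => if h : k' = k then (if h ▸ c = s then 1 else 0) else 0, ?_, ?_, ?_⟩
    · intro k' c hne
      by_cases h : k' = k
      · subst h
        simp only [dif_pos rfl] at hne
        have hcs : c = s := by
          by_contra hcs
          simp [hcs] at hne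
        subst hcs
        exact ⟨Nat.succ_pos _, hs, hinj⟩
      · simp [dif_neg h] at hne
    · intro x y
      rw [Finset.sum_eq_single k]
      · rw [Finset.sum_eq_single s]
        · simp
        · intro c _ hcs; simp [hcs]
        · intro h; exact absurd (Finset.mem_univ s) h
      · intro k' _ hk'
        apply Finset.sum_eq_zero; intro c _; simp [dif_neg hk']
      · intro hk; exact absurd (Finset.mem_range.mpr hkn) hk
    · rw [Finset.sum_eq_single k]
      · rw [Finset.sum_eq_single s]
        · simp
        · intro c _ hcs; simp [hcs]
        · intro h; exact absurd (Finset.mem_univ s) h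
      · intro k' _ hk'
        apply Finset.sum_eq_zero; intro c _; simp [dif_neg hk']
      · intro hk; exact absurd (Finset.mem_range.mpr hkn) hk
  · rw [Function.not_injective_iff] at hinj
    obtain ⟨i, j, hij, hne⟩ := hinj
    haveI : NeZero N := ⟨hN.ne'⟩
    set d := (j - i).val with hd
    have hd0 : 0 < d := ZMod.val_pos.mpr (sub_ne_zero.mpr (Ne.symm hne))
    have hdN : d < N := ZMod.val_lt _
    have hwrap : s (i + (d : ZMod N)) = s i := by
      rw [hd, zc (j - i), add_sub_cancel]
      exact hij.symm
    obtain ⟨a1, ha1, hw1, hl1⟩ :=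
      ih d hdN hd0 (subPath N s i d) (subPath_closed hd0 hs i hwrap)
    obtain ⟨a2, ha2, hw2, hl2⟩ :=
      ih (N - d) (by omega) (by omega) (subPath N s (i + (d : ZMod N)) (N - d))
        (subPath_closed (by omega) hs _ (wrap2 hd0 hdN s i hwrap))
    refine ⟨fun k c => a1 k c + a2 k c, ?_, ?_, ?_⟩
    · intro k c h
      beta_reduce at h
      rcases Nat.eq_zero_or_pos (a1 k c) with h0 | h0
      · exact ha2 k c (by omega)
      · exact ha1 k c h0.ne'
    · intro x y
      beta_reduce
      rw [card_split hd0 hdN s i hwrap x y, hw1 x y, hw2 x y, ← Finset.sum_add_distrib]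
      refine Finset.sum_congr rfl fun k _ => ?_
      rw [← Finset.sum_add_distrib]
      refine Finset.sum_congr rfl fun c _ => ?_
      ring
    · beta_reduce
      have h3 : (∑ k ∈ Finset.range n, ∑ c : ZMod (k + 1) → Fin n,
          (a1 k c + a2 k c) * (k + 1)) =
          (∑ k ∈ Finset.range n, ∑ c : ZMod (k + 1) → Fin n, a1 k c * (k + 1)) +
          (∑ k ∈ Finset.range n, ∑ c : ZMod (k + 1) → Fin n, a2 k c * (k + 1)) := by
        rw [← Finset.sum_add_distrib]
        refine Finset.sum_congr rfl fun k _ => ?_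
        rw [← Finset.sum_add_distrib]
        refine Finset.sum_congr rfl fun c _ => ?_
        ring
      rw [h3, hl1, hl2]
      omega



/-- every closed path `s` of length `N` in `Γ` decomposes into simple
cycles: there are natural numbers `a k c` (supported on simple cycles, here indexed
by representatives of length `k+1` for `k < n`) with
`W(s) = Σ a_c • W(c)`, `Σ a_c ℓ(c) = N`, and the subgraph whose edge set is the
union of the edge sets of the cycles with `a_c ≠ 0` is strongly connected after
removing isolated nodes. -/
theorem weightMatrix_cycle_decomposition {n : ℕ} (Γ : Fin n → Fin n → Prop)
    (N : ℕ) (hN : 1 ≤ N) (s : ZMod N → Fin n) (hs : IsClosedPath Γ N s) :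
    ∃ a : (k : ℕ) → (ZMod (k + 1) → Fin n) → ℕ,
      (∀ (k : ℕ) (c : ZMod (k + 1) → Fin n), a k c ≠ 0 → IsSimpleCycle Γ (k + 1) c) ∧
      (weightMatrix N s =
        ∑ k ∈ Finset.range n, ∑ c : ZMod (k + 1) → Fin n,
          (a k c : ℝ) • weightMatrix (k + 1) c) ∧
      ((∑ k ∈ Finset.range n, ∑ c : ZMod (k + 1) → Fin n, a k c * (k + 1)) = N) ∧
      (∀ i j : Fin n,
        (∃ j' : Fin n,
          (∃ (k : ℕ) (c : ZMod (k + 1) → Fin n), a k c ≠ 0 ∧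
            ∃ t : ZMod (k + 1), c t = i ∧ c (t + 1) = j') ∨
          (∃ (k : ℕ) (c : ZMod (k + 1) → Fin n), a k c ≠ 0 ∧
            ∃ t : ZMod (k + 1), c t = j' ∧ c (t + 1) = i)) →
        (∃ j' : Fin n,
          (∃ (k : ℕ) (c : ZMod (k + 1) → Fin n), a k c ≠ 0 ∧
            ∃ t : ZMod (k + 1), c t = j ∧ c (t + 1) = j') ∨
          (∃ (k : ℕ) (c : ZMod (k + 1) → Fin n), a k c ≠ 0 ∧
            ∃ t : ZMod (k + 1), c t = j' ∧ c (t + 1) = j)) →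
        Relation.ReflTransGen
          (fun x y : Fin n => ∃ (k : ℕ) (c : ZMod (k + 1) → Fin n), a k c ≠ 0 ∧
            ∃ t : ZMod (k + 1), c t = x ∧ c (t + 1) = y) i j) := by
  haveI : NeZero N := ⟨by omega⟩
  obtain ⟨a, ha, hw, hl⟩ := decomp Γ N (by omega) s hs
  have hwR : weightMatrix N s = ∑ k ∈ Finset.range n, ∑ c : ZMod (k + 1) → Fin n,
      (a k c : ℝ) • weightMatrix (k + 1) c := by
    ext x y
    simp only [weightMatrix, Matrix.sum_apply, Matrix.smul_apply, Matrix.of_apply,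
      smul_eq_mul]
    exact_mod_cast hw x y
  set R : Fin n → Fin n → Prop := fun x y => ∃ (k : ℕ) (c : ZMod (k + 1) → Fin n),
      a k c ≠ 0 ∧ ∃ t : ZMod (k + 1), c t = x ∧ c (t + 1) = y with hR
  -- every edge of `s` is an edge of some used cycle
  have edgeR : ∀ m : ZMod N, R (s m) (s (m + 1)) := by
    intro m
    have h0 : Nat.card {m' : ZMod N // s m' = s m ∧ s (m' + 1) = s (m + 1)} ≠ 0 := by
      have : Nonempty {m' : ZMod N // s m' = s m ∧ s (m' + 1) = s (m + 1)} :=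
        ⟨⟨m, rfl, rfl⟩⟩
      simp [Nat.card_pos.ne']
    rw [hw (s m) (s (m + 1))] at h0
    obtain ⟨k, -, hk⟩ := Finset.exists_ne_zero_of_sum_ne_zero h0
    obtain ⟨c, -, hc⟩ := Finset.exists_ne_zero_of_sum_ne_zero hk
    have hca : a k c ≠ 0 := by intro h; rw [h] at hc; simp at hc
    have hcard : Nat.card {t : ZMod (k + 1) // c t = s m ∧ c (t + 1) = s (m + 1)} ≠ 0 := by
      intro h; rw [h] at hc; simp at hc
    rw [Nat.card_ne_zero] at hcard
    obtain ⟨⟨t, ht1, ht2⟩⟩ := hcard.1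
    exact ⟨k, c, hca, t, ht1, ht2⟩
  -- every node of a used cycle is visited by `s`
  have visits : ∀ x : Fin n,
      (∃ j' : Fin n, R x j' ∨ R j' x) → ∃ m : ZMod N, s m = x := by
    intro x ⟨j', hj'⟩
    have key : ∀ u v : Fin n, R u v → ∃ m : ZMod N, s m = u ∧ s (m + 1) = v := by
      rintro u v ⟨k, c, hka, t, ht1, ht2⟩
      have hkn : k < n := by
        have hinj := (ha k c hka).2.2
        have := Fintype.card_le_of_injective c hinj
        rw [ZMod.card, Fintype.card_fin] at this
        omega
      have hcard : Nat.card {t' : ZMod (k + 1) // c t' = u ∧ c (t' + 1) = v} ≠ 0 := by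
        have : Nonempty {t' : ZMod (k + 1) // c t' = u ∧ c (t' + 1) = v} := ⟨⟨t, ht1, ht2⟩⟩
        simp [Nat.card_pos.ne']
      have h1 : a k c * Nat.card {t' : ZMod (k + 1) // c t' = u ∧ c (t' + 1) = v} ≤
          ∑ c' : ZMod (k + 1) → Fin n,
            a k c' * Nat.card {t' : ZMod (k + 1) // c' t' = u ∧ c' (t' + 1) = v} :=
        Finset.single_le_sum (f := fun c' : ZMod (k + 1) → Fin n =>
          a k c' * Nat.card {t' : ZMod (k + 1) // c' t' = u ∧ c' (t' + 1) = v})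
          (fun _ _ => Nat.zero_le _) (Finset.mem_univ c)
      have h2 : (∑ c' : ZMod (k + 1) → Fin n,
            a k c' * Nat.card {t' : ZMod (k + 1) // c' t' = u ∧ c' (t' + 1) = v}) ≤
          ∑ k' ∈ Finset.range n, ∑ c' : ZMod (k' + 1) → Fin n,
            a k' c' * Nat.card {t' : ZMod (k' + 1) // c' t' = u ∧ c' (t' + 1) = v} :=
        Finset.single_le_sum (f := fun k' => ∑ c' : ZMod (k' + 1) → Fin n,
          a k' c' * Nat.card {t' : ZMod (k' + 1) // c' t' = u ∧ c' (t' + 1) = v})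
          (fun _ _ => Nat.zero_le _) (Finset.mem_range.mpr hkn)
      have h3 : Nat.card {m : ZMod N // s m = u ∧ s (m + 1) = v} ≠ 0 := by
        rw [hw u v]
        have : 0 < a k c * Nat.card {t' : ZMod (k + 1) // c t' = u ∧ c (t' + 1) = v} :=
          Nat.pos_of_ne_zero (Nat.mul_ne_zero hka hcard)
        exact (lt_of_lt_of_le (lt_of_lt_of_le this h1) h2).ne'
      rw [Nat.card_ne_zero] at h3
      obtain ⟨⟨m, hm1, hm2⟩⟩ := h3.1
      exact ⟨m, hm1, hm2⟩
    rcases hj' with h | h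
    · obtain ⟨m, hm, -⟩ := key x j' h
      exact ⟨m, hm⟩
    · obtain ⟨m, -, hm⟩ := key j' x h
      exact ⟨m + 1, hm⟩
  -- reachability along `s`
  have reach : ∀ m m' : ZMod N, Relation.ReflTransGen R (s m) (s m') := by
    have key : ∀ (r : ℕ) (m : ZMod N),
        Relation.ReflTransGen R (s m) (s (m + (r : ZMod N))) := by
      intro r
      induction r with
      | zero =>
        intro m
        simp only [Nat.cast_zero, add_zero]
        exact Relation.ReflTransGen.refl
      | succ r ihr =>
        intro m
        refine (ihr m).tail ?_
        have : s (m + ((r + 1 : ℕ) : ZMod N)) = s ((m + (r : ZMod N)) + 1) := by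
          congr 1; push_cast; ring
        rw [this]
        exact edgeR (m + (r : ZMod N))
    intro m m'
    have : m' = m + (((m' - m).val : ℕ) : ZMod N) := by
      rw [zc (m' - m), add_sub_cancel]
    rw [this]
    exact key _ m
  refine ⟨a, ha, hwR, hl, ?_⟩
  intro i j hi hj
  obtain ⟨m, hm⟩ := visits i hi
  obtain ⟨m', hm'⟩ := visits j hj
  rw [← hm, ← hm']
  exact reach m m'
end

section
/- For every m ≥ 1 and N ≥ 1, the TINN local polytope L^{(N,m)} is contained in the polytope L^{(*,m)}. Moreover, if every integer k with 1 ≤ k ≤ 2^m divides N, then L^{(N,m)} = L^{(*,m)}. -/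
/-- The single-party correlator vector of a local deterministic strategy
`s : Fin m → Fin 2`: its `x`-th entry is `(-1) ^ (s x)`. -/
noncomputable def chi {m : ℕ} (s : Fin m → Fin 2) : Fin m → ℝ :=
  fun x => (-1 : ℝ) ^ (s x : ℕ)

/-- The nearest-neighbour correlator vector of a pair of strategies:
`v_{(s,t)} = ((χ_s + χ_t)/2 , χ_s ⊗ χ_t)`. -/
noncomputable def nnVec {m : ℕ} (s t : Fin m → Fin 2) :
    (Fin m → ℝ) × (Fin m → Fin m → ℝ) :=
  ((2 : ℝ)⁻¹ • (chi s + chi t), fun x y => chi s x * chi t y)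

/-- The TINN local polytope `L^{(N,m)}`: the convex hull of the averaged
nearest-neighbour correlator vectors of all strategy assignments `s : ZMod N → S`. -/
noncomputable def tinnPolytope (m N : ℕ) : Set ((Fin m → ℝ) × (Fin m → Fin m → ℝ)) :=
  convexHull ℝ
    {v | ∃ s : ZMod N → (Fin m → Fin 2),
      v = (N : ℝ)⁻¹ • ∑ i ∈ Finset.range N, nnVec (s (i : ZMod N)) (s ((i : ZMod N) + 1))}

/-- The polytope `L^{(*,m)}`: the convex hull of the averaged nearest-neighbour
correlator vectors along simple cycles (injective cyclic tuples) of strategies,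
i.e. of simple cycles in the complete directed graph with self-loops on the
strategy set. -/
noncomputable def tinnStarPolytope (m : ℕ) : Set ((Fin m → ℝ) × (Fin m → Fin m → ℝ)) :=
  convexHull ℝ
    {v | ∃ (ℓ : ℕ) (c : ZMod ℓ → (Fin m → Fin 2)), 0 < ℓ ∧ Function.Injective c ∧
      v = (ℓ : ℝ)⁻¹ • ∑ i ∈ Finset.range ℓ, nnVec (c (i : ZMod ℓ)) (c ((i : ZMod ℓ) + 1))}

noncomputable def wSum (m n : ℕ) (s : ZMod n → (Fin m → Fin 2)) :
    (Fin m → ℝ) × (Fin m → Fin m → ℝ) :=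
  ∑ i ∈ Finset.range n, nnVec (s (i : ZMod n)) (s ((i : ZMod n) + 1))

lemma sum_range_eq_sum_zmod {β : Type*} [AddCommMonoid β] {n : ℕ} [NeZero n]
    (f : ZMod n → β) : ∑ i ∈ Finset.range n, f (i : ZMod n) = ∑ x : ZMod n, f x := by
  refine Finset.sum_nbij' (fun i => (i : ZMod n)) (fun x => x.val) ?_ ?_ ?_ ?_ ?_
  · intro a _; exact Finset.mem_univ _
  · intro x _; exact Finset.mem_range.mpr (ZMod.val_lt x)
  · intro a ha; exact ZMod.val_natCast_of_lt (Finset.mem_range.mp ha)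
  · intro x _; exact ZMod.natCast_rightInverse x
  · intro a _; rfl

lemma sum_zmod_rotate {β : Type*} [AddCommMonoid β] {n : ℕ} [NeZero n] (a : ZMod n)
    (f : ZMod n → β) : ∑ x : ZMod n, f (a + x) = ∑ x : ZMod n, f x :=
  Fintype.sum_equiv (Equiv.addLeft a) _ _ (fun _ => rfl)

lemma wSum_split {m n d : ℕ} (hd : 0 < d) (hdn : d < n)
    (s : ZMod n → (Fin m → Fin 2)) (a : ZMod n) (h : s a = s (a + (d : ZMod n))) :
    wSum m n s = wSum m d (fun k => s (a + (k.val : ZMod n)))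
      + wSum m (n - d) (fun k => s (a + (d : ZMod n) + (k.val : ZMod n))) := by
  haveI : NeZero n := ⟨(hd.trans hdn).ne'⟩
  haveI : NeZero d := ⟨hd.ne'⟩
  haveI : NeZero (n - d) := ⟨(Nat.sub_pos_of_lt hdn).ne'⟩
  set G : ZMod n → (Fin m → ℝ) × (Fin m → Fin m → ℝ) :=
    fun x => nnVec (s x) (s (x + 1)) with hG
  have hL : wSum m n s = ∑ i ∈ Finset.range n, G (a + (i : ZMod n)) := by
    rw [wSum, sum_range_eq_sum_zmod (f := G), ← sum_zmod_rotate a G,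
      ← sum_range_eq_sum_zmod]
  have h1 : wSum m d (fun k => s (a + (k.val : ZMod n)))
      = ∑ i ∈ Finset.range d, G (a + (i : ZMod n)) := by
    rw [wSum]
    refine Finset.sum_congr rfl fun i hi => ?_
    have hi' := Finset.mem_range.mp hi
    have e1 : (((i : ZMod d)).val : ZMod n) = (i : ZMod n) := by
      rw [ZMod.val_natCast_of_lt hi']
    have e2 : s (a + ((((i : ZMod d) + 1)).val : ZMod n)) = s (a + (i : ZMod n) + 1) := by
      have hcast : ((i : ZMod d) + 1) = ((i + 1 : ℕ) : ZMod d) := by push_cast; ring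
      rw [hcast, ZMod.val_natCast]
      rcases Nat.lt_or_ge (i + 1) d with hlt | hge
      · rw [Nat.mod_eq_of_lt hlt]; push_cast; rw [add_assoc]
      · have hde : i + 1 = d := le_antisymm hi' hge
        rw [hde, Nat.mod_self]
        have harg : a + (i : ZMod n) + 1 = a + (d : ZMod n) := by
          rw [← hde]; push_cast; ring
        rw [harg]
        simpa using h
    simp only [hG, e1, e2]
  have h2 : wSum m (n - d) (fun k => s (a + (d : ZMod n) + (k.val : ZMod n)))
      = ∑ i ∈ Finset.range (n - d), G (a + ((d + i : ℕ) : ZMod n)) := by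
    rw [wSum]
    refine Finset.sum_congr rfl fun i hi => ?_
    have hi' := Finset.mem_range.mp hi
    have e1 : s (a + (d : ZMod n) + (((i : ZMod (n - d))).val : ZMod n))
        = s (a + ((d + i : ℕ) : ZMod n)) := by
      rw [ZMod.val_natCast_of_lt hi']; push_cast; rw [add_assoc]
    have e2 : s (a + (d : ZMod n) + ((((i : ZMod (n - d)) + 1)).val : ZMod n))
        = s (a + ((d + i : ℕ) : ZMod n) + 1) := by
      have hcast : ((i : ZMod (n - d)) + 1) = ((i + 1 : ℕ) : ZMod (n - d)) := by
        push_cast; ring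
      rw [hcast, ZMod.val_natCast]
      rcases Nat.lt_or_ge (i + 1) (n - d) with hlt | hge
      · rw [Nat.mod_eq_of_lt hlt]; push_cast; ring_nf
      · have hde : i + 1 = n - d := le_antisymm hi' hge
        rw [hde, Nat.mod_self]
        have harg : a + ((d + i : ℕ) : ZMod n) + 1 = a := by
          have : ((d + i + 1 : ℕ) : ZMod n) = ((n : ℕ) : ZMod n) := by
            congr 1
            omega
          push_cast
          rw [add_assoc, add_assoc]
          rw [show ((d : ZMod n) + ((i : ZMod n) + 1)) = ((d + i + 1 : ℕ) : ZMod n) by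
            push_cast; ring]
          rw [this, ZMod.natCast_self, add_zero]
        rw [harg]
        push_cast
        rw [add_zero]
        exact h.symm
    simp only [hG, e1, e2]
  have hsplit := Finset.sum_range_add (fun i => G (a + (i : ZMod n))) d (n - d)
  rw [Nat.add_sub_cancel' hdn.le] at hsplit
  rw [hL, h1, h2, hsplit]

lemma wSum_mem_star (m : ℕ) : ∀ n : ℕ, 0 < n → ∀ s : ZMod n → (Fin m → Fin 2),
    (n : ℝ)⁻¹ • wSum m n s ∈ tinnStarPolytope m := by
  intro n
  induction n using Nat.strong_induction_on with
  | _ n ih =>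
    intro hn s
    by_cases hinj : Function.Injective s
    · exact subset_convexHull ℝ _ ⟨n, s, hn, hinj, rfl⟩
    · rw [Function.not_injective_iff] at hinj
      obtain ⟨a, b, hab, hne⟩ := hinj
      haveI : NeZero n := ⟨hn.ne'⟩
      set d : ℕ := (b - a).val with hdd
      have hd0 : 0 < d := by
        rw [hdd]
        apply Nat.pos_of_ne_zero
        intro h0
        have : b - a = 0 := by rwa [ZMod.val_eq_zero] at h0
        exact hne (sub_eq_zero.mp this).symm
      have hdn : d < n := ZMod.val_lt _
      have hb : a + (d : ZMod n) = b := by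
        rw [hdd, ZMod.natCast_rightInverse (b - a)]; ring
      have h : s a = s (a + (d : ZMod n)) := by rw [hb]; exact hab
      have hsplit := wSum_split hd0 hdn s a h
      have hx := ih d hdn hd0 (fun k => s (a + (k.val : ZMod n)))
      have hy := ih (n - d) (Nat.sub_lt hn hd0) (Nat.sub_pos_of_lt hdn)
        (fun k => s (a + (d : ZMod n) + (k.val : ZMod n)))
      have hconv : Convex ℝ (tinnStarPolytope m) := by
        unfold tinnStarPolytope; exact convex_convexHull ℝ _
      have hdR : (d : ℝ) ≠ 0 := Nat.cast_ne_zero.mpr hd0.ne'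
      have hnR : (n : ℝ) ≠ 0 := Nat.cast_ne_zero.mpr hn.ne'
      have hndR : ((n - d : ℕ) : ℝ) ≠ 0 := Nat.cast_ne_zero.mpr (Nat.sub_pos_of_lt hdn).ne'
      have key : (n : ℝ)⁻¹ • wSum m n s
          = ((d : ℝ) / n) • ((d : ℝ)⁻¹ • wSum m d (fun k => s (a + (k.val : ZMod n))))
            + (((n - d : ℕ) : ℝ) / n) • (((n - d : ℕ) : ℝ)⁻¹ •
              wSum m (n - d) (fun k => s (a + (d : ZMod n) + (k.val : ZMod n)))) := by
        rw [hsplit, smul_add, smul_smul, smul_smul]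
        congr 1
        · congr 1; field_simp
        · congr 1; field_simp
      rw [key]
      refine hconv hx hy (by positivity) (by positivity) ?_
      rw [Nat.cast_sub hdn.le]
      field_simp
      ring

lemma star_gen_mem (m N : ℕ) (hN : 0 < N) (hdvd : ∀ k : ℕ, 1 ≤ k → k ≤ 2 ^ m → k ∣ N)
    (ℓ : ℕ) (c : ZMod ℓ → (Fin m → Fin 2)) (hℓ : 0 < ℓ) (hc : Function.Injective c) :
    (ℓ : ℝ)⁻¹ • wSum m ℓ c ∈ tinnPolytope m N := by
  haveI : NeZero ℓ := ⟨hℓ.ne'⟩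
  have hcard : ℓ ≤ 2 ^ m := by
    have hle := Fintype.card_le_of_injective c hc
    simpa [ZMod.card] using hle
  obtain ⟨k, hk⟩ := hdvd ℓ hℓ hcard
  have hk0 : 0 < k := Nat.pos_of_ne_zero (by rintro rfl; simp at hk; omega)
  set s : ZMod N → (Fin m → Fin 2) :=
    fun x => c (ZMod.castHom ⟨k, hk⟩ (ZMod ℓ) x) with hs
  have hterm : ∀ i : ℕ, nnVec (s (i : ZMod N)) (s ((i : ZMod N) + 1))
      = nnVec (c (i : ZMod ℓ)) (c ((i : ZMod ℓ) + 1)) := by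
    intro i
    have h1 : s (i : ZMod N) = c (i : ZMod ℓ) := by
      simp only [hs]; rw [map_natCast]
    have h2 : s ((i : ZMod N) + 1) = c ((i : ZMod ℓ) + 1) := by
      simp only [hs]; rw [map_add, map_one, map_natCast]
    rw [h1, h2]
  have hrep : ∀ j : ℕ,
      (∑ i ∈ Finset.range (ℓ * j), nnVec (c (i : ZMod ℓ)) (c ((i : ZMod ℓ) + 1)))
        = j • wSum m ℓ c := by
    intro j
    induction j with
    | zero => simp
    | succ j ihj =>
      rw [Nat.mul_succ, Finset.sum_range_add, ihj, succ_nsmul]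
      congr 1
      rw [wSum]
      refine Finset.sum_congr rfl fun i _ => ?_
      have hcast : ((ℓ * j + i : ℕ) : ZMod ℓ) = (i : ZMod ℓ) := by
        push_cast [ZMod.natCast_self]; ring
      rw [hcast]
  have hws : wSum m N s = k • wSum m ℓ c := by
    rw [wSum, Finset.sum_congr rfl (fun i _ => hterm i)]
    rw [show N = ℓ * k from hk]
    exact hrep k
  apply subset_convexHull ℝ _
  refine ⟨s, ?_⟩
  show (ℓ : ℝ)⁻¹ • wSum m ℓ c = (N : ℝ)⁻¹ • wSum m N s
  rw [hws, ← Nat.cast_smul_eq_nsmul ℝ k, smul_smul]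
  congr 1
  have hℓR : (ℓ : ℝ) ≠ 0 := Nat.cast_ne_zero.mpr hℓ.ne'
  have hNR : (N : ℝ) ≠ 0 := Nat.cast_ne_zero.mpr hN.ne'
  have : (N : ℝ) = (ℓ : ℝ) * k := by rw [hk]; push_cast; ring
  rw [this]
  have hkR : (k : ℝ) ≠ 0 := Nat.cast_ne_zero.mpr hk0.ne'
  field_simp

/-- for every `m ≥ 1` and `N ≥ 1`, the TINN local polytope `L^{(N,m)}`
is contained in `L^{(*,m)}`; moreover, if every integer `k` with `1 ≤ k ≤ 2^m`
divides `N`, then `L^{(N,m)} = L^{(*,m)}`. -/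
theorem tinnPolytope_subset_and_eq_star (m N : ℕ) (hm : 1 ≤ m) (hN : 1 ≤ N) :
    tinnPolytope m N ⊆ tinnStarPolytope m ∧
    ((∀ k : ℕ, 1 ≤ k → k ≤ 2 ^ m → k ∣ N) → tinnPolytope m N = tinnStarPolytope m) := by
  have hconvStar : Convex ℝ (tinnStarPolytope m) := by
    unfold tinnStarPolytope; exact convex_convexHull ℝ _
  have hconvP : Convex ℝ (tinnPolytope m N) := by
    unfold tinnPolytope; exact convex_convexHull ℝ _
  have hsub : tinnPolytope m N ⊆ tinnStarPolytope m := by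
    unfold tinnPolytope
    refine convexHull_min ?_ hconvStar
    rintro v ⟨s, rfl⟩
    exact wSum_mem_star m N hN s
  refine ⟨hsub, fun hdvd => Set.Subset.antisymm hsub ?_⟩
  unfold tinnStarPolytope
  refine convexHull_min ?_ hconvP
  rintro v ⟨ℓ, c, hℓ, hc, rfl⟩
  exact star_gen_mem m N hN hdvd ℓ c hℓ hc
end

section
/- For every m ≥ 1, R ≥ 1 and N ≥ 1, the TI-R local polytope L^{(N,m,R)} is contained in the polytope L^{(*,m,R)}. Moreover, if every integer k with 1 ≤ k ≤ 2^{Rm} divides N, then L^{(N,m,R)} = L^{(*,m,R)}. -/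
/-- The range-`R` correlator vector of a tuple of strategies `u 0, …, u R`:
its first block is `(1/(R+1)) Σ_{j=0}^R χ_{u j}` and its `k`-th matrix block
(`k = 1, …, R`, indexed here by `k : Fin R` standing for `k+1`) is
`(1/(R+1-k)) Σ_{j=0}^{R-k} χ_{u j} ⊗ χ_{u (j+k)}`. -/
noncomputable def tiRVec (m R : ℕ) (u : ℕ → (Fin m → Fin 2)) :
    (Fin m → ℝ) × (Fin R → Fin m → Fin m → ℝ) :=
  (((R : ℝ) + 1)⁻¹ • ∑ j ∈ Finset.range (R + 1), chi (u j),
   fun k => (((R - (k : ℕ) : ℕ)) : ℝ)⁻¹ •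
     ∑ j ∈ Finset.range (R - (k : ℕ)),
       (fun x y => chi (u j) x * chi (u (j + (k : ℕ) + 1)) y : Fin m → Fin m → ℝ))

/-- The TI-`R` local polytope `L^{(N,m,R)}`: the convex hull of the averaged range-`R`
correlator vectors of all strategy assignments `s : ZMod N → S`. -/
noncomputable def tiRPolytope (m R N : ℕ) :
    Set ((Fin m → ℝ) × (Fin R → Fin m → Fin m → ℝ)) :=
  convexHull ℝ
    {v | ∃ s : ZMod N → (Fin m → Fin 2),
      v = (N : ℝ)⁻¹ • ∑ i ∈ Finset.range N,
        tiRVec m R (fun j => s ((i : ZMod N) + (j : ZMod N)))}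

/-- The edge relation of the De Bruijn graph `DB(2^m, R)` on `R`-tuples of
strategies: there is an edge from `a` to `b` iff the last `R-1` entries of `a`
coincide with the first `R-1` entries of `b`. -/
def dbEdge (m R : ℕ) (a b : Fin R → (Fin m → Fin 2)) : Prop :=
  ∀ (j : ℕ) (h : j + 1 < R), b ⟨j, by omega⟩ = a ⟨j + 1, h⟩

/-- The `(R+1)`-tuple of strategies labelling the edge `(a, b)` of the De Bruijn
graph: the entries of `a` followed by the last entry of `b`. -/
def dbEdgeTuple (m R : ℕ) (hR : 0 < R) (a b : Fin R → (Fin m → Fin 2)) :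
    ℕ → (Fin m → Fin 2) :=
  fun j => if h : j < R then a ⟨j, h⟩ else b ⟨R - 1, by omega⟩

/-- The polytope `L^{(*,m,R)}`: the convex hull of the averaged range-`R` correlator
vectors along simple cycles of the De Bruijn graph `DB(2^m, R)`. -/
noncomputable def tiRStarPolytope (m R : ℕ) (hR : 0 < R) :
    Set ((Fin m → ℝ) × (Fin R → Fin m → Fin m → ℝ)) :=
  convexHull ℝ
    {v | ∃ (ℓ : ℕ) (c : ZMod ℓ → (Fin R → (Fin m → Fin 2))), 0 < ℓ ∧
      Function.Injective c ∧ (∀ i : ZMod ℓ, dbEdge m R (c i) (c (i + 1))) ∧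
      v = (ℓ : ℝ)⁻¹ • ∑ i ∈ Finset.range ℓ,
        tiRVec m R (dbEdgeTuple m R hR (c (i : ZMod ℓ)) (c ((i : ZMod ℓ) + 1)))}

section Walk

variable {V : Type*} {E : Type*} [AddCommGroup E] [Module ℝ E]
variable (A : V → V → Prop) (f : V → V → E)

/-- The set of normalized edge-sums over simple cycles of the digraph `A`,
with edge-vectors given by `f`. -/
def cycSet : Set E :=
  {v | ∃ (ℓ : ℕ) (c : ZMod ℓ → V), 0 < ℓ ∧ Function.Injective c ∧
    (∀ i : ZMod ℓ, A (c i) (c (i + 1))) ∧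
    v = (ℓ : ℝ)⁻¹ • ∑ i ∈ Finset.range ℓ, f (c (i : ZMod ℓ)) (c ((i : ZMod ℓ) + 1))}

/-- Every normalized edge-sum over a closed walk lies in the convex hull of the
normalized edge-sums over simple cycles. -/
lemma walk_mem_cyc : ∀ N : ℕ, 0 < N → ∀ w : ℕ → V, w N = w 0 →
    (∀ k, k < N → A (w k) (w (k + 1))) →
    (N : ℝ)⁻¹ • ∑ k ∈ Finset.range N, f (w k) (w (k + 1)) ∈
      convexHull ℝ (cycSet A f) := by
  intro N
  induction N using Nat.strong_induction_on with
  | _ N ih =>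
  intro hN w hclose hadj
  by_cases hinj : ∀ i < N, ∀ j < N, w i = w j → i = j
  · -- the walk is a simple cycle
    apply subset_convexHull
    haveI : NeZero N := ⟨hN.ne'⟩
    set c : ZMod N → V := fun i => w i.val with hc
    have hsucc : ∀ i : ZMod N, c (i + 1) = w (i.val + 1) := by
      intro i
      have hlt : i.val < N := ZMod.val_lt i
      have hcast : ((i.val + 1 : ℕ) : ZMod N) = i + 1 := by
        rw [Nat.cast_add, Nat.cast_one, ZMod.natCast_val, ZMod.cast_id]
      rcases lt_or_eq_of_le (Nat.succ_le_of_lt hlt) with h | h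
      · show w (i + 1).val = w (i.val + 1)
        rw [← hcast, ZMod.val_cast_of_lt h]
      · show w (i + 1).val = w (i.val + 1)
        have h' : i.val + 1 = N := h
        have e : (i + 1 : ZMod N) = 0 := by
          rw [← hcast, h', ZMod.natCast_self]
        rw [e, ZMod.val_zero, h']
        exact hclose.symm
    refine ⟨N, c, hN, ?_, ?_, ?_⟩
    · intro i j hij
      have := hinj i.val (ZMod.val_lt i) j.val (ZMod.val_lt j) hij
      exact ZMod.val_injective N this
    · intro i
      rw [hsucc]
      exact hadj i.val (ZMod.val_lt i)
    · congr 1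
      apply Finset.sum_congr rfl
      intro k hk
      rw [Finset.mem_range] at hk
      rw [hsucc]
      simp only [hc]
      rw [ZMod.val_cast_of_lt hk]
  · push_neg at hinj
    obtain ⟨i₀, hi₀, j₀, hj₀, hw₀, hne₀⟩ := hinj
    obtain ⟨i, j, hij, hjN, hwij⟩ : ∃ i j, i < j ∧ j < N ∧ w i = w j := by
      rcases lt_or_gt_of_ne hne₀ with h | h
      · exact ⟨i₀, j₀, h, hj₀, hw₀⟩
      · exact ⟨j₀, i₀, h, hi₀, hw₀.symm⟩
    set ℓ₁ := j - i with hℓ₁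
    set ℓ₂ := N - (j - i) with hℓ₂
    have hℓ₁pos : 0 < ℓ₁ := by omega
    have hℓ₂pos : 0 < ℓ₂ := by omega
    have hℓ₁lt : ℓ₁ < N := by omega
    have hℓ₂lt : ℓ₂ < N := by omega
    set w₁ : ℕ → V := fun k => w (i + k) with hw₁
    set w₂ : ℕ → V := fun k => if k < i then w k else w (k + (j - i)) with hw₂
    have h1 := ih ℓ₁ hℓ₁lt hℓ₁pos w₁ (by
        show w (i + ℓ₁) = w (i + 0)
        have : i + ℓ₁ = j := by omega
        rw [this]; simpa using hwij.symm)
      (by intro k hk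
          show A (w (i + k)) (w (i + k + 1))
          exact hadj (i + k) (by omega))
    have h2 := ih ℓ₂ hℓ₂lt hℓ₂pos w₂ (by
        show w₂ ℓ₂ = w₂ 0
        simp only [hw₂, if_neg (by omega : ¬ ℓ₂ < i)]
        by_cases hi : 0 < i
        · rw [if_pos hi]
          have : ℓ₂ + (j - i) = N := by omega
          rw [this]; exact hclose
        · rw [if_neg hi]
          have hi0 : i = 0 := by omega
          have e1 : ℓ₂ + (j - i) = N := by omega
          have e2 : 0 + (j - i) = j := by omega
          rw [e1, e2, hclose]
          rw [hi0] at hwij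
          exact hwij)
      (by intro k hk
          by_cases h1' : k + 1 < i
          · show A (w₂ k) (w₂ (k + 1))
            simp only [hw₂, if_pos (by omega : k < i), if_pos h1']
            exact hadj k (by omega)
          · by_cases h2' : k < i
            · have hki : k + 1 = i := by omega
              show A (w₂ k) (w₂ (k + 1))
              simp only [hw₂, if_pos h2', if_neg (by omega : ¬ k + 1 < i)]
              have : k + 1 + (j - i) = j := by omega
              rw [this, ← hwij, ← hki]
              exact hadj k (by omega)
            · show A (w₂ k) (w₂ (k + 1))
              simp only [hw₂, if_neg h2', if_neg (by omega : ¬ k + 1 < i)]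
              have : k + 1 + (j - i) = k + (j - i) + 1 := by omega
              rw [this]
              exact hadj (k + (j - i)) (by omega))
    -- sum splitting
    have hS1 : ∑ k ∈ Finset.range ℓ₁, f (w₁ k) (w₁ (k + 1)) =
        ∑ k ∈ Finset.Ico i j, f (w k) (w (k + 1)) := by
      rw [Finset.sum_Ico_eq_sum_range]
      have : j - i = ℓ₁ := rfl
      rw [this]
      exact Finset.sum_congr rfl fun k _ => rfl
    have hS2 : ∑ k ∈ Finset.range ℓ₂, f (w₂ k) (w₂ (k + 1)) =
        ∑ k ∈ Finset.Ico 0 i, f (w k) (w (k + 1)) +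
          ∑ k ∈ Finset.Ico j N, f (w k) (w (k + 1)) := by
      rw [Finset.range_eq_Ico,
        ← Finset.sum_Ico_consecutive (fun k => f (w₂ k) (w₂ (k + 1)))
          (Nat.zero_le i) (by omega : i ≤ ℓ₂)]
      congr 1
      · apply Finset.sum_congr rfl
        intro k hk
        rw [Finset.mem_Ico] at hk
        have hki : k < i := hk.2
        by_cases h1' : k + 1 < i
        · simp only [hw₂, if_pos hki, if_pos h1']
        · have hk1 : k + 1 = i := by omega
          simp only [hw₂, if_pos hki, if_neg (by omega : ¬ k + 1 < i)]
          have : k + 1 + (j - i) = j := by omega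
          rw [this, ← hwij, hk1]
      · rw [Finset.sum_Ico_eq_sum_range, Finset.sum_Ico_eq_sum_range]
        have hlen : ℓ₂ - i = N - j := by omega
        rw [hlen]
        apply Finset.sum_congr rfl
        intro k _
        simp only [hw₂, if_neg (by omega : ¬ i + k < i),
          if_neg (by omega : ¬ i + k + 1 < i)]
        rw [show i + k + (j - i) = j + k by omega,
          show i + k + 1 + (j - i) = j + k + 1 by omega]
    have htot : ∑ k ∈ Finset.range N, f (w k) (w (k + 1)) =
        (∑ k ∈ Finset.range ℓ₁, f (w₁ k) (w₁ (k + 1))) +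
        (∑ k ∈ Finset.range ℓ₂, f (w₂ k) (w₂ (k + 1))) := by
      rw [hS1, hS2, Finset.range_eq_Ico,
        ← Finset.sum_Ico_consecutive (fun k => f (w k) (w (k + 1)))
          (Nat.zero_le j) (le_of_lt hjN),
        ← Finset.sum_Ico_consecutive (fun k => f (w k) (w (k + 1)))
          (Nat.zero_le i) (le_of_lt hij)]
      abel
    have hcomb := (convex_convexHull ℝ (cycSet A f)) h1 h2
      (le_of_lt (by positivity : (0:ℝ) < (ℓ₁ : ℝ) / N))
      (le_of_lt (by positivity : (0:ℝ) < (ℓ₂ : ℝ) / N))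
      (by
        have hsum : (ℓ₁ : ℝ) + ℓ₂ = N := by
          have : ℓ₁ + ℓ₂ = N := by omega
          exact_mod_cast congrArg (Nat.cast : ℕ → ℝ) this
        field_simp
        linarith)
    convert hcomb using 1
    rw [htot, smul_add, smul_smul, smul_smul]
    congr 2
    · rw [div_mul_eq_mul_div, mul_inv_cancel₀ (by positivity), one_div]
    · rw [div_mul_eq_mul_div, mul_inv_cancel₀ (by positivity), one_div]

end Walk

/-- `tiRVec` only depends on the first `R+1` entries of `u`. -/
lemma tiRVec_congr (m R : ℕ) (u u' : ℕ → (Fin m → Fin 2))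
    (h : ∀ j ≤ R, u j = u' j) : tiRVec m R u = tiRVec m R u' := by
  unfold tiRVec
  refine Prod.ext ?_ ?_
  · simp only
    congr 1
    apply Finset.sum_congr rfl
    intro j hj
    rw [Finset.mem_range] at hj
    rw [h j (by omega)]
  · simp only
    funext k
    congr 1
    apply Finset.sum_congr rfl
    intro j hj
    rw [Finset.mem_range] at hj
    have hk := k.2
    rw [h j (by omega), h (j + (k : ℕ) + 1) (by omega)]

/-- Shifting along a cycle in the De Bruijn graph. -/
lemma cycle_shift {m R ℓ : ℕ} (c : ZMod ℓ → (Fin R → Fin m → Fin 2))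
    (hcadj : ∀ i : ZMod ℓ, dbEdge m R (c i) (c (i + 1))) (hR : 0 < R) :
    ∀ (j : ℕ) (hj : j < R) (k : ZMod ℓ),
      c k ⟨j, hj⟩ = c (k + (j : ZMod ℓ)) ⟨0, hR⟩ := by
  intro j
  induction j with
  | zero => intro hj k; simp
  | succ j ihj =>
    intro hj k
    have e1 : c k ⟨j + 1, hj⟩ = c (k + 1) ⟨j, by omega⟩ := (hcadj k j hj).symm
    rw [e1, ihj (by omega) (k + 1),
      show k + 1 + (j : ZMod ℓ) = k + ((j + 1 : ℕ) : ZMod ℓ) by push_cast; ring]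

/-- for every `m ≥ 1`, `R ≥ 1` and `N ≥ 1`, the TI-`R` local polytope
`L^{(N,m,R)}` is contained in `L^{(*,m,R)}`; moreover, if every integer `k` with
`1 ≤ k ≤ 2^{Rm}` divides `N`, then `L^{(N,m,R)} = L^{(*,m,R)}`. -/
theorem tiRPolytope_subset_and_eq_star (m R N : ℕ) (hm : 1 ≤ m) (hR : 1 ≤ R)
    (hN : 1 ≤ N) :
    tiRPolytope m R N ⊆ tiRStarPolytope m R hR ∧
    ((∀ k : ℕ, 1 ≤ k → k ≤ 2 ^ (R * m) → k ∣ N) →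
      tiRPolytope m R N = tiRStarPolytope m R hR) := by
  set f : (Fin R → Fin m → Fin 2) → (Fin R → Fin m → Fin 2) →
      (Fin m → ℝ) × (Fin R → Fin m → Fin m → ℝ) :=
    fun a b => tiRVec m R (dbEdgeTuple m R hR a b) with hf
  have hstar : tiRStarPolytope m R hR = convexHull ℝ (cycSet (dbEdge m R) f) := rfl
  -- Part 1: the inclusion
  have hsub : tiRPolytope m R N ⊆ tiRStarPolytope m R hR := by
    rw [hstar]
    apply convexHull_min _ (convex_convexHull ℝ _)
    rintro v ⟨s, rfl⟩
    set w : ℕ → (Fin R → Fin m → Fin 2) :=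
      fun k => fun j : Fin R => s ((k : ZMod N) + ((j : ℕ) : ZMod N)) with hw
    have hclose : w N = w 0 := by
      funext j
      simp only [hw]
      norm_num
    have hadj : ∀ k, k < N → dbEdge m R (w k) (w (k + 1)) := by
      intro k _ j hj
      simp only [hw]
      congr 1
      push_cast
      ring
    have hterm : ∀ i : ℕ,
        tiRVec m R (fun j => s ((i : ZMod N) + ((j : ℕ) : ZMod N))) =
          f (w i) (w (i + 1)) := by
      intro i
      apply tiRVec_congr
      intro j hj
      by_cases h : j < R
      · simp only [hf, dbEdgeTuple, dif_pos h, hw]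
      · have hjR : j = R := by omega
        simp only [hf, dbEdgeTuple]
        rw [dif_neg h]
        show s ((i : ZMod N) + ((j : ℕ) : ZMod N)) =
          s (((i + 1 : ℕ) : ZMod N) + (((R - 1 : ℕ) : ℕ) : ZMod N))
        rw [hjR]
        congr 1
        push_cast [Nat.cast_sub hR]
        ring
    have := walk_mem_cyc (dbEdge m R) f N hN w hclose hadj
    convert this using 2
    exact Finset.sum_congr rfl fun i _ => hterm i
  refine ⟨hsub, fun hdiv => le_antisymm hsub ?_⟩
  -- Part 2: reverse inclusion under divisibility
  rw [hstar]
  apply convexHull_min _ (convex_convexHull ℝ _)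
  rintro v ⟨ℓ, c, hℓ, hcinj, hcadj, rfl⟩
  haveI : NeZero ℓ := ⟨hℓ.ne'⟩
  have hle : ℓ ≤ 2 ^ (R * m) := by
    have h1 : ℓ = Fintype.card (ZMod ℓ) := (ZMod.card ℓ).symm
    have h2 := Fintype.card_le_of_injective c hcinj
    rw [← h1] at h2
    calc ℓ ≤ Fintype.card (Fin R → Fin m → Fin 2) := h2
      _ = 2 ^ (R * m) := by
        simp [Fintype.card_fun]
        rw [← pow_mul, Nat.mul_comm]
  obtain ⟨d, hNd⟩ : ℓ ∣ N := hdiv ℓ hℓ hle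
  have hd : 0 < d := by
    rcases Nat.eq_zero_or_pos d with h | h
    · rw [h, Nat.mul_zero] at hNd; omega
    · exact h
  set φ : ZMod N →+* ZMod ℓ := ZMod.castHom ⟨d, hNd⟩ (ZMod ℓ) with hφ
  set s : ZMod N → (Fin m → Fin 2) := fun i => c (φ i) ⟨0, hR⟩ with hs
  set g : ZMod ℓ → (Fin m → ℝ) × (Fin R → Fin m → Fin m → ℝ) :=
    fun k => tiRVec m R (dbEdgeTuple m R hR (c k) (c (k + 1))) with hg
  have hshift := cycle_shift c hcadj hR
  -- the window of s at i equals the edge tuple at i mod ℓ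
  have hwin : ∀ i : ℕ,
      tiRVec m R (fun j => s ((i : ZMod N) + ((j : ℕ) : ZMod N))) = g (i : ZMod ℓ) := by
    intro i
    apply tiRVec_congr
    intro j hj
    have hφi : ∀ n : ℕ, φ ((n : ZMod N)) = (n : ZMod ℓ) := fun n => map_natCast φ n
    have hsval : s ((i : ZMod N) + ((j : ℕ) : ZMod N)) =
        c ((i : ZMod ℓ) + (j : ZMod ℓ)) ⟨0, hR⟩ := by
      simp only [hs, map_add, hφi]
    by_cases h : j < R
    · rw [hsval]
      simp only [hg, dbEdgeTuple, dif_pos h]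
      rw [hshift j h]
    · have hjR : j = R := by omega
      rw [hsval]
      simp only [hg, dbEdgeTuple]
      rw [dif_neg h]
      rw [hshift (R - 1) (by omega)]
      rw [hjR]
      have harg : ((i : ZMod ℓ) + (R : ZMod ℓ)) =
          (i : ZMod ℓ) + 1 + ((R - 1 : ℕ) : ZMod ℓ) := by
        push_cast [Nat.cast_sub hR]; ring
      rw [harg]
  -- the periodic sum collapses
  have hsum : ∀ e : ℕ, ∑ i ∈ Finset.range (ℓ * e), g (i : ZMod ℓ) =
      e • ∑ k ∈ Finset.range ℓ, g (k : ZMod ℓ) := by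
    intro e
    induction e with
    | zero => simp
    | succ e ihe =>
      have hrange : ℓ * (e + 1) = ℓ * e + ℓ := by ring
      rw [hrange, Finset.range_eq_Ico,
        ← Finset.sum_Ico_consecutive (fun i => g (i : ZMod ℓ))
          (Nat.zero_le (ℓ * e)) (by omega : ℓ * e ≤ ℓ * e + ℓ),
        ← Finset.range_eq_Ico, ihe, Finset.sum_Ico_eq_sum_range]
      rw [show ℓ * e + ℓ - ℓ * e = ℓ by omega]
      have : ∀ k, ((ℓ * e + k : ℕ) : ZMod ℓ) = (k : ZMod ℓ) := by
        intro k
        push_cast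
        simp [ZMod.natCast_self]
      have hcollapse : ∑ x ∈ Finset.range ℓ, g (((ℓ * e + x : ℕ)) : ZMod ℓ) =
          ∑ k ∈ Finset.range ℓ, g ((k : ℕ) : ZMod ℓ) :=
        Finset.sum_congr rfl fun k _ => congrArg g (this k)
      rw [succ_nsmul]
      congr 1
  -- conclude: the cycle point is a generator of the TI polytope
  apply subset_convexHull
  refine ⟨s, ?_⟩
  have e1 : ∑ i ∈ Finset.range N,
      tiRVec m R (fun j => s ((i : ZMod N) + ((j : ℕ) : ZMod N))) =
      d • ∑ k ∈ Finset.range ℓ, g (k : ZMod ℓ) := by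
    rw [Finset.sum_congr rfl fun i _ => hwin i, hNd, hsum d]
  rw [e1]
  have e2 : ∑ i ∈ Finset.range ℓ,
      tiRVec m R (dbEdgeTuple m R hR (c (i : ZMod ℓ)) (c ((i : ZMod ℓ) + 1))) =
      ∑ k ∈ Finset.range ℓ, g (k : ZMod ℓ) := rfl
  rw [e2, ← Nat.cast_smul_eq_nsmul ℝ, smul_smul]
  congr 1
  rw [hNd]
  have hℓ' : (ℓ : ℝ) ≠ 0 := Nat.cast_ne_zero.mpr hℓ.ne'
  have hd' : (d : ℝ) ≠ 0 := Nat.cast_ne_zero.mpr hd.ne'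
  push_cast
  field_simp
end

section
/- Let Γ be a finite directed graph on Fin n with edge-weight function ω and at least one simple cycle, let λ be the minimum over all simple cycles c of ω(c)/ℓ(c), and let Γ^crit be the critical graph of Γ. Then for every closed path s of length N in Γ, the weight ω(s) satisfies ω(s) ≥ N·λ, and ω(s) = N·λ if and only if every edge traversed by s is an edge of Γ^crit. In particular, the closed paths of length N achieving the minimal weight N·λ are precisely the closed paths of length N in Γ^crit. -/
namespace WCP

lemma sum_range_zmod {k : ℕ} [NeZero k] (F : ZMod k → ℝ) (z0 : ZMod k) :
    ∑ x ∈ Finset.range k, F (z0 + (x : ZMod k)) = ∑ z : ZMod k, F z := by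
  refine Finset.sum_nbij' (fun x => z0 + (x : ZMod k)) (fun z => (z - z0).val)
    ?_ ?_ ?_ ?_ ?_
  · intro a _; exact Finset.mem_univ _
  · intro z _; exact Finset.mem_range.mpr (ZMod.val_lt _)
  · intro a ha
    rw [add_sub_cancel_left, ZMod.val_natCast, Nat.mod_eq_of_lt (Finset.mem_range.mp ha)]
  · intro z _
    rw [ZMod.natCast_rightInverse (z - z0), add_sub_cancel]
  · intro a _; rfl

lemma sum_range_zmod' {k : ℕ} [NeZero k] (F : ZMod k → ℝ) :
    ∑ x ∈ Finset.range k, F (x : ZMod k) = ∑ z : ZMod k, F z := by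
  have := sum_range_zmod F 0
  simpa using this

variable {n : ℕ} (Γ : Fin n → Fin n → Prop) (ω : Fin n → Fin n → ℝ) (lam : ℝ)

/-- reduced edge weight along a ℕ-indexed walk -/
noncomputable def E (f : ℕ → Fin n) (i : ℕ) : ℝ := ω (f i) (f (i + 1)) - lam

/-- total reduced weight of walk of length `N` -/
noncomputable def Wt (f : ℕ → Fin n) (N : ℕ) : ℝ := ∑ i ∈ Finset.range N, E ω lam f i

/-- closed walk of length `N` -/
def IsCW (f : ℕ → Fin n) (N : ℕ) : Prop := (∀ i < N, Γ (f i) (f (i + 1))) ∧ f N = f 0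

/-- the edge `(u,v)` lies on a critical simple cycle -/
def Crit (u v : Fin n) : Prop :=
  ∃ (k : ℕ) (c : ZMod k → Fin n), IsSimpleCycle Γ k c ∧
    ((k : ℝ)⁻¹ * ∑ t ∈ Finset.range k, ω (c (t : ZMod k)) (c ((t : ZMod k) + 1))) = lam ∧
    ∃ t : ZMod k, c t = u ∧ c (t + 1) = v

/-- walk from `u` to `v` of length `m` and reduced weight `W` -/
def HasWalk (u v : Fin n) (m : ℕ) (W : ℝ) : Prop :=
  ∃ f : ℕ → Fin n, f 0 = u ∧ f m = v ∧ (∀ i < m, Γ (f i) (f (i + 1))) ∧ Wt ω lam f m = W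

variable {Γ ω lam}

lemma hasWalk_refl (u : Fin n) : HasWalk Γ ω lam u u 0 0 :=
  ⟨fun _ => u, rfl, rfl, fun i h => absurd h (Nat.not_lt_zero i), by simp [Wt]⟩

lemma hasWalk_trans {u v w : Fin n} {m1 m2 : ℕ} {W1 W2 : ℝ}
    (h1 : HasWalk Γ ω lam u v m1 W1) (h2 : HasWalk Γ ω lam v w m2 W2) :
    HasWalk Γ ω lam u w (m1 + m2) (W1 + W2) := by
  obtain ⟨g1, hg10, hg1m, hg1e, hg1w⟩ := h1
  obtain ⟨g2, hg20, hg2m, hg2e, hg2w⟩ := h2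
  refine ⟨fun x => if x < m1 then g1 x else g2 (x - m1), ?_, ?_, ?_, ?_⟩
  · by_cases h : 0 < m1
    · simp [h, hg10]
    · have hm : m1 = 0 := by omega
      subst hm
      simp [hg20, ← hg1m, hg10]
  · have : ¬ (m1 + m2 < m1) := by omega
    simp [this, hg2m]
  · intro i hi
    by_cases h : i + 1 < m1
    · have h' : i < m1 := by omega
      simpa [h, h'] using hg1e i h'
    · by_cases h' : i < m1
      · -- i + 1 = m1
        have hi1 : i + 1 = m1 := by omega
        have : g2 0 = g1 (i + 1) := by
          rw [hi1]; simp [hg20, ← hg1m]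
        simpa [h, h', this] using hg1e i h'
      · have h2' : i - m1 < m2 := by omega
        have e1 : i + 1 - m1 = (i - m1) + 1 := by omega
        simpa [h, h', e1] using hg2e (i - m1) h2'
  · -- weight
    rw [Wt, Finset.sum_range_add]
    have ha : ∀ i ∈ Finset.range m1,
        E ω lam (fun x => if x < m1 then g1 x else g2 (x - m1)) i = E ω lam g1 i := by
      intro i hi
      have hi' := Finset.mem_range.mp hi
      by_cases h : i + 1 < m1
      · simp [E, hi', h]
      · have hi1 : i + 1 = m1 := by omega
        have : g2 0 = g1 (i + 1) := by rw [hi1]; simp [hg20, ← hg1m]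
        simp [E, hi', h, this]
    have hb : ∀ i ∈ Finset.range m2,
        E ω lam (fun x => if x < m1 then g1 x else g2 (x - m1)) (m1 + i) = E ω lam g2 i := by
      intro i hi
      have h1 : ¬ (m1 + i < m1) := by omega
      have h2 : ¬ (m1 + i + 1 < m1) := by omega
      have e1 : m1 + i - m1 = i := by omega
      have e2 : m1 + i + 1 - m1 = i + 1 := by omega
      simp [E, h1, h2, e1, e2]
    rw [Finset.sum_congr rfl ha, Finset.sum_congr rfl hb]
    rw [← Wt, ← Wt, hg1w, hg2w]

lemma base_cycle {N : ℕ} (hN : 0 < N) (f : ℕ → Fin n) (hf : IsCW Γ f N)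
    (hinj : ∀ a, a < N → ∀ b, b < N → f a = f b → a = b) :
    ∃ c : ZMod N → Fin n, IsSimpleCycle Γ N c ∧
      (∀ i, i < N → c (i : ZMod N) = f i ∧ c ((i : ZMod N) + 1) = f (i + 1)) ∧
      (∑ t ∈ Finset.range N, ω (c (t : ZMod N)) (c ((t : ZMod N) + 1)))
        = Wt ω lam f N + N * lam := by
  haveI : NeZero N := ⟨hN.ne'⟩
  set c : ZMod N → Fin n := fun z => f z.val with hc
  have key : ∀ i, i < N → c (i : ZMod N) = f i ∧ c ((i : ZMod N) + 1) = f (i + 1) := by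
    intro i hi
    constructor
    · show f (ZMod.val ((i : ℕ) : ZMod N)) = f i
      rw [ZMod.val_natCast, Nat.mod_eq_of_lt hi]
    · have h1 : ((i : ZMod N) + 1) = ((i + 1 : ℕ) : ZMod N) := by push_cast; ring
      rw [h1]
      show f (ZMod.val ((i + 1 : ℕ) : ZMod N)) = f (i + 1)
      rw [ZMod.val_natCast]
      by_cases h : i + 1 < N
      · rw [Nat.mod_eq_of_lt h]
      · have h2 : i + 1 = N := by omega
        rw [h2, Nat.mod_self, ← hf.2]
  refine ⟨c, ⟨hN, ?_, ?_⟩, key, ?_⟩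
  · intro z
    have hz : ((z.val : ℕ) : ZMod N) = z := ZMod.natCast_rightInverse z
    have hk := key z.val (ZMod.val_lt z)
    rw [hz] at hk
    rw [hk.1, hk.2]
    exact hf.1 z.val (ZMod.val_lt z)
  · intro z1 z2 h
    have h' : f z1.val = f z2.val := h
    have := hinj z1.val (ZMod.val_lt z1) z2.val (ZMod.val_lt z2) h'
    exact ZMod.val_injective N this
  · have h1 : ∀ t ∈ Finset.range N,
        ω (c (t : ZMod N)) (c ((t : ZMod N) + 1)) = E ω lam f t + lam := by
      intro t ht
      have hk := key t (Finset.mem_range.mp ht)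
      rw [hk.1, hk.2, E]; ring
    rw [Finset.sum_congr rfl h1, Finset.sum_add_distrib, Finset.sum_const,
      Finset.card_range, nsmul_eq_mul, ← Wt]

lemma lemA (hlb : ∀ (k : ℕ) (c : ZMod k → Fin n), IsSimpleCycle Γ k c →
      lam ≤ (k : ℝ)⁻¹ * ∑ t ∈ Finset.range k, ω (c (t : ZMod k)) (c ((t : ZMod k) + 1))) :
    ∀ N, 0 < N → ∀ f : ℕ → Fin n, IsCW Γ f N →
      0 ≤ Wt ω lam f N ∧
      (Wt ω lam f N = 0 → ∀ i, i < N → Crit Γ ω lam (f i) (f (i + 1))) := by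
  intro N
  induction N using Nat.strong_induction_on with
  | _ N IH =>
  intro hN f hf
  by_cases hinj : ∀ a, a < N → ∀ b, b < N → f a = f b → a = b
  · obtain ⟨c, hsc, hkey, hsum⟩ := base_cycle hN f hf hinj
    have hle := hlb N c hsc
    rw [hsum] at hle
    have hNpos : (0:ℝ) < N := by exact_mod_cast hN
    have h0 : 0 ≤ Wt ω lam f N := by
      rw [inv_mul_eq_div, le_div_iff₀ hNpos] at hle
      nlinarith
    refine ⟨h0, ?_⟩
    intro hw i hi
    have hcval : ((N : ℝ))⁻¹ * ∑ t ∈ Finset.range N,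
        ω (c (t : ZMod N)) (c ((t : ZMod N) + 1)) = lam := by
      rw [hsum, hw]; field_simp; ring
    exact ⟨N, c, hsc, hcval, (i : ZMod N), (hkey i hi).1, (hkey i hi).2⟩
  · -- split
    push_neg at hinj
    obtain ⟨a0, ha0, b0, hb0, hfab0, hne0⟩ := hinj
    obtain ⟨a, b, hab, hbN, hfab⟩ : ∃ a b, a < b ∧ b < N ∧ f a = f b := by
      rcases Nat.lt_or_ge a0 b0 with h | h
      · exact ⟨a0, b0, h, hb0, hfab0⟩
      · exact ⟨b0, a0, by omega, ha0, hfab0.symm⟩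
    set d := b - a with hd
    set m := N - d with hm
    have hd1 : 1 ≤ d := by omega
    have hdN : d < N := by omega
    have hm1 : 1 ≤ m := by omega
    have hmN : m < N := by omega
    have ham : a ≤ m := by omega
    have hbad : a + d = b := by omega
    set f1 : ℕ → Fin n := fun x => f (a + x) with hf1
    set f2 : ℕ → Fin n := fun x => if x < a then f x else f (x + d) with hf2
    have hf2low : ∀ j, j ≤ a → f2 j = f j := by
      intro j hj
      rcases lt_or_eq_of_le hj with h | h
      · simp [hf2, h]
      · subst h
        simp only [hf2, lt_irrefl, if_false]
        rw [hbad, ← hfab]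
    have hf2high : ∀ j, a ≤ j → f2 j = f (j + d) := by
      intro j hj
      simp [hf2, Nat.not_lt.mpr hj]
    have hcw1 : IsCW Γ f1 d := by
      constructor
      · intro i hi
        exact hf.1 (a + i) (by omega)
      · show f (a + d) = f (a + 0)
        rw [hbad, Nat.add_zero, hfab]
    have hcw2 : IsCW Γ f2 m := by
      constructor
      · intro i hi
        by_cases h : i < a
        · rw [hf2low i (by omega), hf2low (i + 1) (by omega)]
          exact hf.1 i (by omega)
        · rw [hf2high i (by omega), hf2high (i + 1) (by omega)]
          have : i + 1 + d = (i + d) + 1 := by omega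
          rw [this]
          exact hf.1 (i + d) (by omega)
      · rw [hf2high m ham, hf2low 0 (by omega), show m + d = N by omega, hf.2]
    -- weights
    have hE1 : ∀ i, E ω lam f1 i = E ω lam f (a + i) := by
      intro i; rfl
    have hE2low : ∀ i, i < a → E ω lam f2 i = E ω lam f i := by
      intro i hi
      unfold E
      rw [hf2low i (by omega), hf2low (i + 1) (by omega)]
    have hE2high : ∀ i, a ≤ i → E ω lam f2 i = E ω lam f (i + d) := by
      intro i hi
      unfold E
      rw [hf2high i hi, hf2high (i + 1) (by omega), show i + 1 + d = i + d + 1 by omega]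
    have hsplit : Wt ω lam f N = Wt ω lam f1 d + Wt ω lam f2 m := by
      have e1 : Wt ω lam f1 d = ∑ j ∈ Finset.range d, E ω lam f (a + j) :=
        Finset.sum_congr rfl fun j _ => hE1 j
      have e2 : Wt ω lam f2 m
          = ∑ j ∈ Finset.range a, E ω lam f j
            + ∑ j ∈ Finset.range (m - a), E ω lam f (a + d + j) := by
        obtain ⟨q, hq⟩ : ∃ q, q = m - a := ⟨m - a, rfl⟩
        rw [← hq, Wt, show m = a + q by omega, Finset.sum_range_add]
        congr 1
        · exact Finset.sum_congr rfl fun j hj => hE2low j (Finset.mem_range.mp hj)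
        · refine Finset.sum_congr rfl fun j _ => ?_
          rw [hE2high (a + j) (by omega), show a + j + d = a + d + j by omega]
      rw [Wt, show N = a + (d + (m - a)) by omega, Finset.sum_range_add,
        Finset.sum_range_add, e1, e2]
      have : ∑ j ∈ Finset.range (m - a), E ω lam f (a + (d + j))
          = ∑ j ∈ Finset.range (m - a), E ω lam f (a + d + j) :=
        Finset.sum_congr rfl fun j _ => by rw [show a + (d + j) = a + d + j by omega]
      rw [this]; ring
    obtain ⟨hA1, hB1⟩ := IH d hdN hd1 f1 hcw1
    obtain ⟨hA2, hB2⟩ := IH m hmN hm1 f2 hcw2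
    constructor
    · rw [hsplit]; linarith
    · intro hw i hi
      have hw1 : Wt ω lam f1 d = 0 := by rw [hsplit] at hw; linarith
      have hw2 : Wt ω lam f2 m = 0 := by rw [hsplit] at hw; linarith
      by_cases h1 : i < a
      · have := hB2 hw2 i (by omega)
        rwa [hf2low i (by omega), hf2low (i + 1) (by omega)] at this
      · by_cases h2 : i < b
        · have := hB1 hw1 (i - a) (by omega)
          have e1 : f1 (i - a) = f i := by
            show f (a + (i - a)) = f i
            rw [show a + (i - a) = i by omega]
          have e2 : f1 (i - a + 1) = f (i + 1) := by
            show f (a + (i - a + 1)) = f (i + 1)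
            rw [show a + (i - a + 1) = i + 1 by omega]
          rwa [e1, e2] at this
        · have := hB2 hw2 (i - d) (by omega)
          have e1 : f2 (i - d) = f i := by
            rw [hf2high (i - d) (by omega), show i - d + d = i by omega]
          have e2 : f2 (i - d + 1) = f (i + 1) := by
            rw [hf2high (i - d + 1) (by omega), show i - d + 1 + d = i + 1 by omega]
          rwa [e1, e2] at this

lemma crit_walk {u v : Fin n} (h : Crit Γ ω lam u v) :
    ∃ m, HasWalk Γ ω lam v u m (-(ω u v - lam)) := by
  obtain ⟨k, c, ⟨hk, hcp, hci⟩, hval, t0, ht0, ht1⟩ := h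
  haveI : NeZero k := ⟨hk.ne'⟩
  have hkk : ((1 + (k - 1) : ℕ) : ZMod k) = 0 := by
    rw [show 1 + (k - 1) = k by omega, ZMod.natCast_self]
  have hshift : t0 + 1 + ((k - 1 : ℕ) : ZMod k) = t0 := by
    have : (1 : ZMod k) + ((k - 1 : ℕ) : ZMod k) = 0 := by
      rw [show (1 : ZMod k) = ((1 : ℕ) : ZMod k) by norm_cast, ← Nat.cast_add, hkk]
    rw [add_assoc, this, add_zero]
  set g : ℕ → Fin n := fun x => c (t0 + 1 + (x : ZMod k)) with hg
  have hg1 : ∀ x : ℕ, g (x + 1) = c (t0 + 1 + (x : ZMod k) + 1) := by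
    intro x
    show c (t0 + 1 + ((x + 1 : ℕ) : ZMod k)) = _
    push_cast
    ring_nf
  -- total cycle reduced weight is zero
  have hS : ∑ t ∈ Finset.range k, ω (c (t : ZMod k)) (c ((t : ZMod k) + 1))
      = k * lam := by
    have hk0 : (k : ℝ) ≠ 0 := by
      exact_mod_cast hk.ne'
    field_simp at hval
    linarith [hval]
  set F : ZMod k → ℝ := fun z => ω (c z) (c (z + 1)) - lam with hF
  have hFsum : ∑ z : ZMod k, F z = 0 := by
    rw [← sum_range_zmod' F]
    have : ∑ x ∈ Finset.range k, F ((x : ZMod k))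
        = (∑ t ∈ Finset.range k, ω (c (t : ZMod k)) (c ((t : ZMod k) + 1)))
          - k * lam := by
      rw [Finset.sum_sub_distrib, Finset.sum_const, Finset.card_range, nsmul_eq_mul]
    rw [this, hS]; ring
  refine ⟨k - 1, g, ?_, ?_, ?_, ?_⟩
  · show c (t0 + 1 + ((0 : ℕ) : ZMod k)) = v
    rw [Nat.cast_zero, add_zero, ht1]
  · show c (t0 + 1 + ((k - 1 : ℕ) : ZMod k)) = u
    rw [hshift, ht0]
  · intro i _
    rw [hg1 i]
    exact hcp _
  · -- weight
    have hE : ∀ x : ℕ, E ω lam g x = F (t0 + 1 + (x : ZMod k)) := by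
      intro x
      rw [E, hg1 x]
    have h1 : Wt ω lam g (k - 1)
        = ∑ x ∈ Finset.range (k - 1), F (t0 + 1 + (x : ZMod k)) :=
      Finset.sum_congr rfl fun x _ => hE x
    have h2 : ∑ x ∈ Finset.range k, F (t0 + 1 + (x : ZMod k)) = 0 := by
      rw [sum_range_zmod F (t0 + 1), hFsum]
    have h2' : ∑ x ∈ Finset.range ((k - 1) + 1), F (t0 + 1 + (x : ZMod k)) = 0 := by
      rw [show k - 1 + 1 = k by omega]; exact h2
    rw [Finset.sum_range_succ] at h2'
    have h3 : F (t0 + 1 + ((k - 1 : ℕ) : ZMod k)) = ω u v - lam := by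
      rw [hshift, hF]
      simp only
      rw [ht0, ht1]
    rw [h1]
    rw [h3] at h2'
    linarith

lemma lemB (hlb : ∀ (k : ℕ) (c : ZMod k → Fin n), IsSimpleCycle Γ k c →
      lam ≤ (k : ℝ)⁻¹ * ∑ t ∈ Finset.range k, ω (c (t : ZMod k)) (c ((t : ZMod k) + 1)))
    {N : ℕ} (hN : 0 < N) (f : ℕ → Fin n) (hf : IsCW Γ f N)
    (hcrit : ∀ i, i < N → Crit Γ ω lam (f i) (f (i + 1))) :
    Wt ω lam f N ≤ 0 := by
  have key : ∀ j, j ≤ N → ∃ m, HasWalk Γ ω lam (f N) (f (N - j)) m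
      (-(∑ i ∈ Finset.range j, E ω lam f (N - 1 - i))) := by
    intro j
    induction j with
    | zero =>
      intro _
      exact ⟨0, by simpa using hasWalk_refl (f N)⟩
    | succ j IHj =>
      intro hj
      obtain ⟨m, hm⟩ := IHj (by omega)
      have hi0 : N - 1 - j < N := by omega
      obtain ⟨m', hm'⟩ := crit_walk (hcrit (N - 1 - j) hi0)
      rw [show N - 1 - j + 1 = N - j by omega] at hm'
      have htr := hasWalk_trans hm hm'
      refine ⟨m + m', ?_⟩
      rw [show N - (j + 1) = N - 1 - j by omega, Finset.sum_range_succ]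
      have : -(∑ i ∈ Finset.range j, E ω lam f (N - 1 - i)) +
          -(ω (f (N - 1 - j)) (f (N - j)) - lam)
          = -((∑ i ∈ Finset.range j, E ω lam f (N - 1 - i)) + E ω lam f (N - 1 - j)) := by
        rw [E, show N - 1 - j + 1 = N - j by omega]; ring
      rwa [this] at htr
  obtain ⟨m, g, hg0, hgm, hge, hgw⟩ := key N le_rfl
  rw [Finset.sum_range_reflect (fun i => E ω lam f i) N, ← Wt] at hgw
  rcases Nat.eq_zero_or_pos m with hm0 | hmpos
  · subst hm0
    have : Wt ω lam g 0 = 0 := by simp [Wt]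
    rw [this] at hgw
    linarith
  · have hgcw : IsCW Γ g m := by
      refine ⟨hge, ?_⟩
      rw [hg0, hgm, Nat.sub_self, hf.2]
    have := (lemA hlb m hmpos g hgcw).1
    rw [hgw] at this
    linarith

end WCP

/-- let `Γ` be a weighted directed graph on `Fin n` with at least one
simple cycle, let `lam` be the minimum normalized weight `ω(c)/ℓ(c)` over all simple
cycles `c` (expressed as `IsLeast`). Then every closed path `s` of length `N` has
weight `ω(s) ≥ N * lam`, with equality if and only if every edge traversed by `s`
lies on some simple cycle of normalized weight `lam`, i.e. is an edge of the
critical graph; in particular, the closed paths of length `N` of minimal weight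
`N * lam` are exactly the closed paths of length `N` in the critical graph. -/
theorem weight_closed_path_ge_and_critical {n : ℕ} (Γ : Fin n → Fin n → Prop)
    (ω : Fin n → Fin n → ℝ) (lam : ℝ)
    (hlam : IsLeast
      {x : ℝ | ∃ (k : ℕ) (c : ZMod k → Fin n), IsSimpleCycle Γ k c ∧
        x = (k : ℝ)⁻¹ * ∑ t ∈ Finset.range k, ω (c (t : ZMod k)) (c ((t : ZMod k) + 1))}
      lam)
    (N : ℕ) (hN : 1 ≤ N) (s : ZMod N → Fin n) (hs : IsClosedPath Γ N s) :
    (N : ℝ) * lam ≤ ∑ i ∈ Finset.range N, ω (s (i : ZMod N)) (s ((i : ZMod N) + 1)) ∧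
    ((∑ i ∈ Finset.range N, ω (s (i : ZMod N)) (s ((i : ZMod N) + 1))) = (N : ℝ) * lam ↔
      ∀ i : ZMod N, ∃ (k : ℕ) (c : ZMod k → Fin n), IsSimpleCycle Γ k c ∧
        ((k : ℝ)⁻¹ * ∑ t ∈ Finset.range k, ω (c (t : ZMod k)) (c ((t : ZMod k) + 1)))
          = lam ∧
        ∃ t : ZMod k, c t = s i ∧ c (t + 1) = s (i + 1)) := by
  haveI : NeZero N := ⟨by omega⟩
  have hN0 : 0 < N := hN
  set f : ℕ → Fin n := fun x => s (x : ZMod N) with hfdef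
  have hf1 : ∀ i : ℕ, f (i + 1) = s ((i : ZMod N) + 1) := by
    intro i
    show s (((i + 1 : ℕ)) : ZMod N) = _
    push_cast
    ring_nf
  have hcw : WCP.IsCW Γ f N := by
    constructor
    · intro i _
      rw [hf1 i]
      exact hs _
    · show s ((N : ℕ) : ZMod N) = s ((0 : ℕ) : ZMod N)
      rw [ZMod.natCast_self, Nat.cast_zero]
  have hlb : ∀ (k : ℕ) (c : ZMod k → Fin n), IsSimpleCycle Γ k c →
      lam ≤ (k : ℝ)⁻¹ * ∑ t ∈ Finset.range k, ω (c (t : ZMod k)) (c ((t : ZMod k) + 1)) :=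
    fun k c hc => hlam.2 ⟨k, c, hc, rfl⟩
  have hterm : ∀ i ∈ Finset.range N, WCP.E ω lam f i
      = ω (s (i : ZMod N)) (s ((i : ZMod N) + 1)) - lam := by
    intro i _
    rw [WCP.E, hf1 i]
  have hWt : WCP.Wt ω lam f N
      = (∑ i ∈ Finset.range N, ω (s (i : ZMod N)) (s ((i : ZMod N) + 1))) - N * lam := by
    rw [WCP.Wt, Finset.sum_congr rfl hterm, Finset.sum_sub_distrib, Finset.sum_const,
      Finset.card_range, nsmul_eq_mul]
  obtain ⟨hA, hBcrit⟩ := WCP.lemA hlb N hN0 f hcw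
  constructor
  · rw [hWt] at hA
    linarith
  · constructor
    · intro heq i
      have hw0 : WCP.Wt ω lam f N = 0 := by rw [hWt, heq]; ring
      have hc := hBcrit hw0 i.val (ZMod.val_lt i)
      have e1 : f i.val = s i := by
        show s ((i.val : ℕ) : ZMod N) = s i
        rw [ZMod.natCast_rightInverse i]
      have e2 : f (i.val + 1) = s (i + 1) := by
        rw [hf1, ZMod.natCast_rightInverse i]
      rw [WCP.Crit, e1, e2] at hc
      exact hc
    · intro hcrit
      have hall : ∀ i, i < N → WCP.Crit Γ ω lam (f i) (f (i + 1)) := by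
        intro i _
        rw [WCP.Crit, hf1 i]
        exact hcrit (i : ZMod N)
      have hle := WCP.lemB hlb hN0 f hcw hall
      rw [hWt] at hA hle
      linarith
end

section
/- For every m ≥ 1, R ≥ 1 and N > 2R, the TI-R local polytope L^{(N,m,R)} ⊂ ℝ^{m+Rm²} is full-dimensional, i.e. its affine span is all of ℝ^{m+Rm²}. -/
lemma sum_range_cast {N : ℕ} [NeZero N] {V : Type*} [AddCommMonoid V] (f : ZMod N → V) :
    ∑ i ∈ Finset.range N, f (i : ZMod N) = ∑ a : ZMod N, f a := by
  refine Finset.sum_nbij' (fun i => (i : ZMod N)) (fun a => a.val) ?_ ?_ ?_ ?_ ?_ <;>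
    intros <;>
    simp_all [ZMod.val_lt, ZMod.natCast_val, ZMod.val_cast_of_lt, Finset.mem_range, Nat.mod_eq_of_lt]

lemma sum_shift {N : ℕ} [NeZero N] {V : Type*} [AddCommMonoid V] (f : ZMod N → V) (c : ZMod N) :
    ∑ a : ZMod N, f (a + c) = ∑ a : ZMod N, f a :=
  Fintype.sum_equiv (Equiv.addRight c) _ _ (fun _ => rfl)

lemma sum_ite_point {N : ℕ} [NeZero N] {V : Type*} [AddCommGroup V] (f : ZMod N → V)
    (c : ZMod N) (u : V) :
    ∑ a : ZMod N, (if a = c then u else f a) = (∑ a : ZMod N, f a) + (u - f c) := by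
  have : ∀ a : ZMod N, (if a = c then u else f a) = f a + (if a = c then u - f a else 0) := by
    intro a; split <;> simp_all
  simp only [this, Finset.sum_add_distrib, Finset.sum_ite_eq' Finset.univ c, Finset.mem_univ,
    if_true]

lemma key {N : ℕ} [NeZero N] {V : Type*} [AddCommGroup V] [Module ℝ V] (T : ℕ) (hT : T ≠ 0)
    (F : ZMod N → V) :
    ∑ i ∈ Finset.range N, (T : ℝ)⁻¹ • ∑ j ∈ Finset.range T, F ((i : ZMod N) + (j : ZMod N))
      = ∑ a : ZMod N, F a := by
  rw [← Finset.smul_sum, Finset.sum_comm]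
  have h1 : ∀ j ∈ Finset.range T,
      (∑ i ∈ Finset.range N, F ((i : ZMod N) + (j : ZMod N))) = ∑ a : ZMod N, F a :=
    fun j _ => (sum_range_cast (fun a => F (a + (j : ZMod N)))).trans (sum_shift F _)
  rw [Finset.sum_congr rfl h1, Finset.sum_const, Finset.card_range,
    ← Nat.cast_smul_eq_nsmul ℝ, smul_smul, inv_mul_cancel₀ (by exact_mod_cast hT), one_smul]

noncomputable def Pt (m R N : ℕ) [NeZero N] (s : ZMod N → (Fin m → Fin 2)) :
    (Fin m → ℝ) × (Fin R → Fin m → Fin m → ℝ) :=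
  ((N : ℝ)⁻¹ • ∑ a : ZMod N, chi (s a),
   fun k => (N : ℝ)⁻¹ • ∑ a : ZMod N,
     (fun x y => chi (s a) x * chi (s (a + ((k : ℕ) : ZMod N) + 1)) y : Fin m → Fin m → ℝ))

lemma gen_eq (m R N : ℕ) [NeZero N] (s : ZMod N → (Fin m → Fin 2)) :
    (N : ℝ)⁻¹ • ∑ i ∈ Finset.range N, tiRVec m R (fun j => s ((i : ZMod N) + (j : ZMod N)))
      = Pt m R N s := by
  unfold tiRVec Pt
  refine Prod.ext ?_ ?_
  · rw [Prod.smul_fst, Prod.fst_sum]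
    congr 1
    have := key (N := N) (R + 1) (Nat.succ_ne_zero R) (fun a => chi (s a))
    simpa using this
  · rw [Prod.smul_snd, Prod.snd_sum]
    funext k
    rw [Pi.smul_apply, Finset.sum_apply]
    congr 1
    have hT : R - (k : ℕ) ≠ 0 := Nat.sub_ne_zero_of_lt k.2
    have hcast : ∀ i j : ℕ,
        s ((i : ZMod N) + ((j + (k : ℕ) + 1 : ℕ) : ZMod N))
          = s (((i : ZMod N) + (j : ZMod N)) + ((k : ℕ) : ZMod N) + 1) := by
      intro i j; push_cast; ring_nf
    calc ∑ i ∈ Finset.range N, (((R - (k : ℕ) : ℕ)) : ℝ)⁻¹ •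
          ∑ j ∈ Finset.range (R - (k : ℕ)),
            (fun x y => chi (s ((i : ZMod N) + (j : ZMod N))) x
              * chi (s ((i : ZMod N) + ((j + (k:ℕ) + 1 : ℕ) : ZMod N))) y : Fin m → Fin m → ℝ)
        = ∑ a : ZMod N, (fun x y => chi (s a) x
            * chi (s (a + ((k : ℕ) : ZMod N) + 1)) y : Fin m → Fin m → ℝ) := by
          simp only [hcast]
          exact key (R - (k:ℕ)) hT
            (fun a => (fun x y => chi (s a) x * chi (s (a + ((k:ℕ) : ZMod N) + 1)) y))

def baseS (m : ℕ) : Fin m → Fin 2 := fun _ => 0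
def flipS {m : ℕ} (x₀ : Fin m) : Fin m → Fin 2 := fun x => if x = x₀ then 1 else 0
def dvec {m : ℕ} (x₀ : Fin m) : Fin m → ℝ := fun x => if x = x₀ then (-2 : ℝ) else 0

lemma chi_baseS {m : ℕ} (x : Fin m) : chi (baseS m) x = 1 := by simp [chi, baseS]

lemma chi_flipS {m : ℕ} (x₀ x : Fin m) : chi (flipS x₀) x = 1 + dvec x₀ x := by
  by_cases h : x = x₀ <;> simp [chi, flipS, dvec, h] <;> norm_num

lemma sum_one {N : ℕ} [NeZero N] : ∑ _a : ZMod N, (1 : ℝ) = N := by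
  simp [Finset.card_univ, ZMod.card]

lemma sum_ite1 {N : ℕ} [NeZero N] (c₁ : ZMod N) (u₁ : ℝ) :
    ∑ a : ZMod N, (if a = c₁ then u₁ else 1) = N + (u₁ - 1) := by
  rw [sum_ite_point (fun _ => (1:ℝ)) c₁ u₁, sum_one]

lemma sum_ite2 {N : ℕ} [NeZero N] (c₁ c₂ : ZMod N) (u₁ u₂ : ℝ) (h12 : c₁ ≠ c₂) :
    ∑ a : ZMod N, (if a = c₁ then u₁ else if a = c₂ then u₂ else 1)
      = N + (u₁ - 1) + (u₂ - 1) := by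
  rw [sum_ite_point (fun a => if a = c₂ then u₂ else 1) c₁ u₁, sum_ite1, if_neg h12]
  ring

lemma sum_ite3 {N : ℕ} [NeZero N] (c₁ c₂ c₃ : ZMod N) (u₁ u₂ u₃ : ℝ)
    (h12 : c₁ ≠ c₂) (h13 : c₁ ≠ c₃) (h23 : c₂ ≠ c₃) :
    ∑ a : ZMod N, (if a = c₁ then u₁ else if a = c₂ then u₂ else if a = c₃ then u₃ else 1)
      = N + (u₁ - 1) + (u₂ - 1) + (u₃ - 1) := by
  rw [sum_ite_point (fun a => if a = c₂ then u₂ else if a = c₃ then u₃ else 1) c₁ u₁,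
    sum_ite2 _ _ _ _ h23, if_neg h12, if_neg h13]
  ring

lemma sum_ite4 {N : ℕ} [NeZero N] (c₁ c₂ c₃ c₄ : ZMod N) (u₁ u₂ u₃ u₄ : ℝ)
    (h12 : c₁ ≠ c₂) (h13 : c₁ ≠ c₃) (h14 : c₁ ≠ c₄) (h23 : c₂ ≠ c₃) (h24 : c₂ ≠ c₄)
    (h34 : c₃ ≠ c₄) :
    ∑ a : ZMod N, (if a = c₁ then u₁ else if a = c₂ then u₂ else if a = c₃ then u₃
        else if a = c₄ then u₄ else 1)
      = N + (u₁ - 1) + (u₂ - 1) + (u₃ - 1) + (u₄ - 1) := by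
  rw [sum_ite_point
      (fun a => if a = c₂ then u₂ else if a = c₃ then u₃ else if a = c₄ then u₄ else 1) c₁ u₁,
    sum_ite3 _ _ _ _ _ _ h23 h24 h34, if_neg h12, if_neg h13, if_neg h14]
  ring

lemma Pt_base (m R N : ℕ) [NeZero N] :
    Pt m R N (fun _ => baseS m) = ((fun _ => 1), fun _ => fun _ _ => 1) := by
  have hN : (N : ℝ) ≠ 0 := Nat.cast_ne_zero.mpr (NeZero.ne N)
  unfold Pt
  refine Prod.ext ?_ ?_
  · funext x
    simp [Finset.sum_apply, chi_baseS, sum_one, hN]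
  · funext k x y
    simp [Finset.sum_apply, chi_baseS, sum_one, hN]

lemma cast_inj' {N a b : ℕ} [NeZero N] (ha : a < N) (hb : b < N) :
    (a : ZMod N) = (b : ZMod N) ↔ a = b := by
  constructor
  · intro h
    have := congrArg ZMod.val h
    rwa [ZMod.val_cast_of_lt ha, ZMod.val_cast_of_lt hb] at this
  · rintro rfl; rfl

lemma cast_ne_zero' {N n : ℕ} [NeZero N] (h0 : 0 < n) (h : n < N) : (n : ZMod N) ≠ 0 := by
  have := (cast_inj' (a := n) (b := 0) h (Nat.pos_of_ne_zero (NeZero.ne N))).not.mpr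
    (Nat.pos_iff_ne_zero.mp h0)
  simpa using this

lemma Pt_single (m R N : ℕ) [NeZero N] (hRN : R < N) (c : ZMod N) (x₀ : Fin m) :
    Pt m R N (fun a => if a = c then flipS x₀ else baseS m)
      = ((fun x => 1 + (N:ℝ)⁻¹ * dvec x₀ x),
         fun _k => fun x y => 1 + (N:ℝ)⁻¹ * (dvec x₀ x + dvec x₀ y)) := by
  have hN : (N : ℝ) ≠ 0 := Nat.cast_ne_zero.mpr (NeZero.ne N)
  unfold Pt
  refine Prod.ext ?_ ?_
  · funext x
    have hs : ∀ a : ZMod N,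
        chi (if a = c then flipS x₀ else baseS m) x = if a = c then 1 + dvec x₀ x else 1 := by
      intro a; split <;> simp [chi_flipS, chi_baseS]
    simp only [Pi.smul_apply, Finset.sum_apply, hs, sum_ite1, smul_eq_mul]
    field_simp
    ring
  · funext k x y
    have hkN : ((k:ℕ) + 1 : ℕ) < N := lt_of_le_of_lt (Nat.succ_le_of_lt k.2) hRN
    set ℓ : ZMod N := ((k:ℕ) : ZMod N) + 1 with hℓdef
    have hℓcast : ℓ = (((k:ℕ) + 1 : ℕ) : ZMod N) := by push_cast [hℓdef]; ring
    have hℓ : ℓ ≠ 0 := by rw [hℓcast]; exact cast_ne_zero' (Nat.succ_pos _) hkN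
    have hc : c ≠ c - ℓ := by
      intro h
      have h' : c + ℓ = c := eq_sub_iff_add_eq.mp h
      exact hℓ (by simpa using h')
    have hterm : ∀ a : ZMod N,
        chi (if a = c then flipS x₀ else baseS m) x *
          chi (if a + ((k:ℕ) : ZMod N) + 1 = c then flipS x₀ else baseS m) y
        = if a = c then 1 + dvec x₀ x else if a = c - ℓ then 1 + dvec x₀ y else 1 := by
      intro a
      have hshift : a + ((k:ℕ) : ZMod N) + 1 = a + ℓ := by rw [hℓdef, add_assoc]
      rw [hshift]
      by_cases h1 : a = c
      · have h2 : a + ℓ ≠ c := by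
          rw [h1]; intro h; exact hℓ (by simpa using h)
        simp [h1, h2, hℓ, chi_flipS, chi_baseS]
      · by_cases h2 : a = c - ℓ
        · have h3 : a + ℓ = c := by rw [h2, sub_add_cancel]
          simp [h1, h2, h3, hℓ, chi_flipS, chi_baseS]
        · have h3 : a + ℓ ≠ c := fun h => h2 (eq_sub_iff_add_eq.mpr h)
          simp [h1, h2, h3, hℓ, chi_flipS, chi_baseS]
    simp only [Pi.smul_apply, Finset.sum_apply, hterm, smul_eq_mul]
    rw [sum_ite2 _ _ _ _ hc]
    field_simp
    ring

lemma Pt_double (m R N : ℕ) [NeZero N] (hN2 : 2 * R < N) (k₀ : Fin R) (x₀ y₀ : Fin m) :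
    Pt m R N (fun a => if a = 0 then flipS x₀
        else if a = ((((k₀:ℕ) + 1 : ℕ)) : ZMod N) then flipS y₀ else baseS m)
      = ((fun x => 1 + (N:ℝ)⁻¹ * (dvec x₀ x + dvec y₀ x)),
         fun k => fun x y => 1 + (N:ℝ)⁻¹ * (dvec x₀ x + dvec y₀ x + dvec x₀ y + dvec y₀ y
             + (if k = k₀ then dvec x₀ x * dvec y₀ y else 0))) := by
  have hN : (N : ℝ) ≠ 0 := Nat.cast_ne_zero.mpr (NeZero.ne N)
  have hRN : R < N := lt_of_le_of_lt (Nat.le_mul_of_pos_left R (by norm_num)) hN2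
  set L₀ : ZMod N := (((k₀:ℕ) + 1 : ℕ) : ZMod N) with hL₀def
  have hK₀N : (k₀:ℕ) + 1 < N := lt_of_le_of_lt (Nat.succ_le_of_lt k₀.2) hRN
  have hL₀ : L₀ ≠ 0 := cast_ne_zero' (Nat.succ_pos _) hK₀N
  unfold Pt
  refine Prod.ext ?_ ?_
  · funext x
    have hs : ∀ a : ZMod N,
        chi (if a = 0 then flipS x₀ else if a = L₀ then flipS y₀ else baseS m) x
          = if a = 0 then 1 + dvec x₀ x else if a = L₀ then 1 + dvec y₀ x else 1 := by
      intro a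
      by_cases h1 : a = 0
      · simp [h1, hL₀.symm, chi_flipS]
      · by_cases h2 : a = L₀ <;> simp [h1, h2, hL₀, chi_flipS, chi_baseS]
    simp only [Pi.smul_apply, Finset.sum_apply, hs, smul_eq_mul]
    rw [sum_ite2 _ _ _ _ (Ne.symm hL₀)]
    field_simp
    ring
  · funext k x y
    have hkN : ((k:ℕ) + 1 : ℕ) < N := lt_of_le_of_lt (Nat.succ_le_of_lt k.2) hRN
    set ℓ : ZMod N := ((k:ℕ) : ZMod N) + 1 with hℓdef
    have hℓcast : ℓ = (((k:ℕ) + 1 : ℕ) : ZMod N) := by push_cast [hℓdef]; ring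
    have hℓ : ℓ ≠ 0 := by rw [hℓcast]; exact cast_ne_zero' (Nat.succ_pos _) hkN
    have hsum : L₀ + ℓ ≠ 0 := by
      rw [hℓcast, hL₀def, ← Nat.cast_add]
      exact cast_ne_zero' (by omega) (by omega)
    have hLneg : L₀ ≠ -ℓ := fun h => hsum (by rw [h]; ring)
    have hshift : ∀ a : ZMod N, a + ((k:ℕ) : ZMod N) + 1 = a + ℓ := fun a => by
      rw [hℓdef, add_assoc]
    by_cases hkk : k = k₀
    · -- ℓ = L₀
      have hLℓ : L₀ = ℓ := by rw [hℓcast, hL₀def, hkk]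
      have hsum2 : ℓ + ℓ ≠ 0 := by rw [hLℓ] at hsum; exact hsum
      have hnegeq : -ℓ ≠ ℓ := fun h => hsum2 (by simpa using (congrArg (· + ℓ) h).symm)
      have hterm : ∀ a : ZMod N,
          chi (if a = 0 then flipS x₀ else if a = L₀ then flipS y₀ else baseS m) x *
            chi (if a + ((k:ℕ) : ZMod N) + 1 = 0 then flipS x₀
              else if a + ((k:ℕ) : ZMod N) + 1 = L₀ then flipS y₀ else baseS m) y
          = if a = 0 then (1 + dvec x₀ x) * (1 + dvec y₀ y)
            else if a = ℓ then 1 + dvec y₀ x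
            else if a = -ℓ then 1 + dvec x₀ y else 1 := by
        intro a
        rw [hshift a, hLℓ]
        by_cases h1 : a = 0
        · have e1 : a + ℓ ≠ 0 := by rw [h1, zero_add]; exact hℓ
          simp [h1, e1, hℓ, chi_flipS, chi_baseS]
        · by_cases h2 : a = ℓ
          · have e1 : a + ℓ ≠ 0 := by
              rw [h2]; intro h; exact hsum (by rw [hLℓ]; exact h)
            have e2 : a + ℓ ≠ ℓ := by rw [h2]; intro h; exact hℓ (by simpa using h)
            simp [h1, h2, e1, e2, hℓ, hsum2, chi_flipS, chi_baseS]
          · by_cases h3 : a = -ℓ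
            · have e1 : a + ℓ = 0 := by rw [h3]; ring
              simp [h1, h2, h3, e1, hℓ, hnegeq, chi_flipS, chi_baseS]
            · have e1 : a + ℓ ≠ 0 := fun h => h3 (eq_neg_of_add_eq_zero_left h)
              have e2 : a + ℓ ≠ ℓ := fun h => h1 (by simpa using h)
              simp [h1, h2, h3, e1, e2, chi_flipS, chi_baseS]
      have d1 : (0 : ZMod N) ≠ ℓ := Ne.symm hℓ
      have d2 : (0 : ZMod N) ≠ -ℓ := Ne.symm (neg_ne_zero.mpr hℓ)
      have d3 : ℓ ≠ -ℓ := fun h => hsum (by rw [hLℓ]; exact add_eq_zero_iff_eq_neg.mpr h)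
      simp only [Pi.smul_apply, Finset.sum_apply, hterm, smul_eq_mul]
      rw [sum_ite3 _ _ _ _ _ _ d1 d2 d3, if_pos hkk]
      field_simp
      ring
    · -- ℓ ≠ L₀
      have hℓL : ℓ ≠ L₀ := by
        rw [hℓcast, hL₀def]
        intro h
        have := (cast_inj' hkN hK₀N).mp h
        exact hkk (Fin.ext (by omega))
      have hnegL : -ℓ ≠ L₀ := Ne.symm hLneg
      have hsub : L₀ - ℓ ≠ 0 := sub_ne_zero.mpr (Ne.symm hℓL)
      have hterm : ∀ a : ZMod N,
          chi (if a = 0 then flipS x₀ else if a = L₀ then flipS y₀ else baseS m) x *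
            chi (if a + ((k:ℕ) : ZMod N) + 1 = 0 then flipS x₀
              else if a + ((k:ℕ) : ZMod N) + 1 = L₀ then flipS y₀ else baseS m) y
          = if a = 0 then 1 + dvec x₀ x
            else if a = L₀ then 1 + dvec y₀ x
            else if a = -ℓ then 1 + dvec x₀ y
            else if a = L₀ - ℓ then 1 + dvec y₀ y else 1 := by
        intro a
        rw [hshift a]
        by_cases h1 : a = 0
        · have e1 : a + ℓ ≠ 0 := by rw [h1, zero_add]; exact hℓ
          have e2 : a + ℓ ≠ L₀ := by rw [h1, zero_add]; exact hℓL
          simp [h1, e1, e2, hL₀, hℓ, hℓL, chi_flipS, chi_baseS]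
        · by_cases h2 : a = L₀
          · have e1 : a + ℓ ≠ 0 := by rw [h2]; exact hsum
            have e2 : a + ℓ ≠ L₀ := by rw [h2]; intro h; exact hℓ (by simpa using h)
            simp [h1, h2, e1, e2, hℓ, hL₀, hsum, chi_flipS, chi_baseS]
          · by_cases h3 : a = -ℓ
            · have e1 : a + ℓ = 0 := by rw [h3]; ring
              simp [h1, h2, h3, e1, hℓ, hnegL, chi_flipS, chi_baseS]
            · by_cases h4 : a = L₀ - ℓ
              · have e1 : a + ℓ = L₀ := by rw [h4]; ring
                have e2 : a + ℓ ≠ 0 := by rw [e1]; exact hL₀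
                simp [h1, h2, h3, h4, e1, e2, hsub, hℓ, hL₀, chi_flipS, chi_baseS]
              · have e1 : a + ℓ ≠ 0 := fun h => h3 (eq_neg_of_add_eq_zero_left h)
                have e2 : a + ℓ ≠ L₀ := fun h => h4 (eq_sub_iff_add_eq.mpr h)
                simp [h1, h2, h3, h4, e1, e2, chi_flipS, chi_baseS]
      have d1 : (0 : ZMod N) ≠ L₀ := Ne.symm hL₀
      have d2 : (0 : ZMod N) ≠ -ℓ := Ne.symm (neg_ne_zero.mpr hℓ)
      have d3 : (0 : ZMod N) ≠ L₀ - ℓ := Ne.symm (sub_ne_zero.mpr (Ne.symm hℓL))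
      have d4 : L₀ ≠ -ℓ := hLneg
      have d5 : L₀ ≠ L₀ - ℓ := by
        intro h
        exact hℓ (by simpa using (eq_sub_iff_add_eq.mp h))
      have d6 : -ℓ ≠ L₀ - ℓ := by
        intro h
        exact hL₀ (by simpa using congrArg (· + ℓ) h.symm)
      simp only [Pi.smul_apply, Finset.sum_apply, hterm, smul_eq_mul]
      rw [sum_ite4 _ _ _ _ _ _ _ _ d1 d2 d3 d4 d5 d6, if_neg hkk]
      field_simp
      ring

lemma sum_dvec {m : ℕ} (y : Fin m) : ∑ y₀ : Fin m, dvec y₀ y = -2 := by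
  simp [dvec, Finset.sum_ite_eq]

lemma span_top (m R N : ℕ) [NeZero N] (hR : 1 ≤ R) (hN2 : 2 * R < N) :
    vectorSpan ℝ {v : (Fin m → ℝ) × (Fin R → Fin m → Fin m → ℝ) |
      ∃ s : ZMod N → (Fin m → Fin 2), v = Pt m R N s} = ⊤ := by
  classical
  have hN : (N : ℝ) ≠ 0 := Nat.cast_ne_zero.mpr (NeZero.ne N)
  have hRN : R < N := lt_of_le_of_lt (Nat.le_mul_of_pos_left R (by norm_num)) hN2
  set W := vectorSpan ℝ {v : (Fin m → ℝ) × (Fin R → Fin m → Fin m → ℝ) |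
      ∃ s : ZMod N → (Fin m → Fin 2), v = Pt m R N s} with hWdef
  have hdiff : ∀ s t : ZMod N → (Fin m → Fin 2), Pt m R N s - Pt m R N t ∈ W := fun s t => by
    exact vsub_mem_vectorSpan ℝ (Set.mem_setOf.mpr ⟨s, rfl⟩) (Set.mem_setOf.mpr ⟨t, rfl⟩)
  have hw1 : ∀ x₀ : Fin m,
      ((fun x => (N:ℝ)⁻¹ * dvec x₀ x),
        fun _k : Fin R => fun x y : Fin m => (N:ℝ)⁻¹ * (dvec x₀ x + dvec x₀ y)) ∈ W := by
    intro x₀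
    have h := hdiff (fun a => if a = 0 then flipS x₀ else baseS m) (fun _ => baseS m)
    rw [Pt_single m R N hRN 0 x₀, Pt_base] at h
    have he : ((fun x => (N:ℝ)⁻¹ * dvec x₀ x),
        fun _k : Fin R => fun x y : Fin m => (N:ℝ)⁻¹ * (dvec x₀ x + dvec x₀ y))
        = (((fun x => 1 + (N:ℝ)⁻¹ * dvec x₀ x),
            fun _k : Fin R => fun x y : Fin m => 1 + (N:ℝ)⁻¹ * (dvec x₀ x + dvec x₀ y))
            - ((fun _ => 1), fun _ => fun _ _ => 1)) := by
      refine Prod.ext ?_ ?_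
      · funext x; simp
      · funext k x y; simp
    rw [he]; exact h
  have hw2 : ∀ (k₀ : Fin R) (x₀ y₀ : Fin m),
      ((0 : Fin m → ℝ),
        fun k : Fin R => fun x y : Fin m =>
          (N:ℝ)⁻¹ * (if k = k₀ then dvec x₀ x * dvec y₀ y else 0)) ∈ W := by
    intro k₀ x₀ y₀
    have h1 := hdiff
      (fun a => if a = 0 then flipS x₀
        else if a = ((((k₀:ℕ) + 1 : ℕ)) : ZMod N) then flipS y₀ else baseS m)
      (fun a => if a = 0 then flipS x₀ else baseS m)
    have h2 := hdiff
      (fun a => if a = ((((k₀:ℕ) + 1 : ℕ)) : ZMod N) then flipS y₀ else baseS m)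
      (fun _ => baseS m)
    have h := W.sub_mem h1 h2
    rw [Pt_double m R N hN2 k₀ x₀ y₀, Pt_single m R N hRN 0 x₀,
      Pt_single m R N hRN _ y₀, Pt_base] at h
    have he : ((0 : Fin m → ℝ),
        fun k : Fin R => fun x y : Fin m =>
          (N:ℝ)⁻¹ * (if k = k₀ then dvec x₀ x * dvec y₀ y else 0))
        = (((fun x => 1 + (N:ℝ)⁻¹ * (dvec x₀ x + dvec y₀ x)),
            fun k : Fin R => fun x y : Fin m =>
              1 + (N:ℝ)⁻¹ * (dvec x₀ x + dvec y₀ x + dvec x₀ y + dvec y₀ y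
                + (if k = k₀ then dvec x₀ x * dvec y₀ y else 0)))
          - ((fun x => 1 + (N:ℝ)⁻¹ * dvec x₀ x),
            fun _k : Fin R => fun x y : Fin m => 1 + (N:ℝ)⁻¹ * (dvec x₀ x + dvec x₀ y))
          - (((fun x => 1 + (N:ℝ)⁻¹ * dvec y₀ x),
            fun _k : Fin R => fun x y : Fin m => 1 + (N:ℝ)⁻¹ * (dvec y₀ x + dvec y₀ y))
            - ((fun _ => 1), fun _ => fun _ _ => 1))) := by
      refine Prod.ext ?_ ?_
      · funext x; simp; ring
      · funext k x y
        simp [mul_ite, mul_zero]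
        split_ifs <;> ring
    rw [he]; exact h
  have hs1 : ∀ x₀ : Fin m,
      ((0 : Fin m → ℝ),
        fun _k : Fin R => fun x _y : Fin m => (N:ℝ)⁻¹ * (dvec x₀ x * (-2))) ∈ W := by
    intro x₀
    have h : (∑ y₀ : Fin m, ∑ k₀ : Fin R,
        ((0 : Fin m → ℝ),
          fun k : Fin R => fun x y : Fin m =>
            (N:ℝ)⁻¹ * (if k = k₀ then dvec x₀ x * dvec y₀ y else 0))) ∈ W :=
      Submodule.sum_mem W fun y₀ _ => Submodule.sum_mem W fun k₀ _ => hw2 k₀ x₀ y₀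
    have he : (∑ y₀ : Fin m, ∑ k₀ : Fin R,
        ((0 : Fin m → ℝ),
          fun k : Fin R => fun x y : Fin m =>
            (N:ℝ)⁻¹ * (if k = k₀ then dvec x₀ x * dvec y₀ y else 0)))
        = ((0 : Fin m → ℝ),
          fun _k : Fin R => fun x _y : Fin m => (N:ℝ)⁻¹ * (dvec x₀ x * (-2))) := by
      refine Prod.ext ?_ ?_
      · simp [Prod.fst_sum]
      · funext k x y
        simp only [Prod.snd_sum, Finset.sum_apply, mul_ite, mul_zero,
          Finset.sum_ite_eq, Finset.mem_univ, if_true, ← Finset.mul_sum, sum_dvec]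
    rw [← he]; exact h
  have hs2 : ∀ x₀ : Fin m,
      ((0 : Fin m → ℝ),
        fun _k : Fin R => fun _x y : Fin m => (N:ℝ)⁻¹ * ((-2) * dvec x₀ y)) ∈ W := by
    intro x₀
    have h : (∑ y₀ : Fin m, ∑ k₀ : Fin R,
        ((0 : Fin m → ℝ),
          fun k : Fin R => fun x y : Fin m =>
            (N:ℝ)⁻¹ * (if k = k₀ then dvec y₀ x * dvec x₀ y else 0))) ∈ W :=
      Submodule.sum_mem W fun y₀ _ => Submodule.sum_mem W fun k₀ _ => hw2 k₀ y₀ x₀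
    have he : (∑ y₀ : Fin m, ∑ k₀ : Fin R,
        ((0 : Fin m → ℝ),
          fun k : Fin R => fun x y : Fin m =>
            (N:ℝ)⁻¹ * (if k = k₀ then dvec y₀ x * dvec x₀ y else 0)))
        = ((0 : Fin m → ℝ),
          fun _k : Fin R => fun _x y : Fin m => (N:ℝ)⁻¹ * ((-2) * dvec x₀ y)) := by
      refine Prod.ext ?_ ?_
      · simp [Prod.fst_sum]
      · funext k x y
        have hsw : ∀ y₀ k₀ : _, (N:ℝ)⁻¹ * (if k = k₀ then dvec y₀ x * dvec x₀ y else 0)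
            = (N:ℝ)⁻¹ * (if k = k₀ then dvec x₀ y * dvec y₀ x else 0) := by
          intro y₀ k₀; ring_nf
        simp only [Prod.snd_sum, Finset.sum_apply, hsw, mul_ite, mul_zero,
          Finset.sum_ite_eq, Finset.mem_univ, if_true, ← Finset.mul_sum, sum_dvec]
        rw [← Finset.sum_mul, sum_dvec]
    rw [← he]; exact h
  have he1 : ∀ x₀ : Fin m,
      ((fun x => (N:ℝ)⁻¹ * dvec x₀ x), (0 : Fin R → Fin m → Fin m → ℝ)) ∈ W := by
    intro x₀
    have h := W.add_mem (W.add_mem (hw1 x₀) (W.smul_mem (2⁻¹ : ℝ) (hs1 x₀)))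
      (W.smul_mem (2⁻¹ : ℝ) (hs2 x₀))
    have he : ((fun x => (N:ℝ)⁻¹ * dvec x₀ x), (0 : Fin R → Fin m → Fin m → ℝ))
        = (((fun x => (N:ℝ)⁻¹ * dvec x₀ x),
            fun _k : Fin R => fun x y : Fin m => (N:ℝ)⁻¹ * (dvec x₀ x + dvec x₀ y))
          + (2⁻¹ : ℝ) • ((0 : Fin m → ℝ),
            fun _k : Fin R => fun x _y : Fin m => (N:ℝ)⁻¹ * (dvec x₀ x * (-2)))
          + (2⁻¹ : ℝ) • ((0 : Fin m → ℝ),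
            fun _k : Fin R => fun _x y : Fin m => (N:ℝ)⁻¹ * ((-2) * dvec x₀ y))) := by
      refine Prod.ext ?_ ?_
      · funext x; simp
      · funext k x y; simp; ring
    rw [he]; exact h
  rw [Submodule.eq_top_iff']
  rintro ⟨v₁, v₂⟩
  have hv : ((v₁, v₂) : (Fin m → ℝ) × (Fin R → Fin m → Fin m → ℝ))
      = (∑ x₀ : Fin m, (-(2⁻¹) * N * v₁ x₀) •
          ((fun x => (N:ℝ)⁻¹ * dvec x₀ x), (0 : Fin R → Fin m → Fin m → ℝ)))
        + ∑ k₀ : Fin R, ∑ x₀ : Fin m, ∑ y₀ : Fin m, ((4⁻¹ : ℝ) * N * v₂ k₀ x₀ y₀) •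
          ((0 : Fin m → ℝ),
            fun k : Fin R => fun x y : Fin m =>
              (N:ℝ)⁻¹ * (if k = k₀ then dvec x₀ x * dvec y₀ y else 0)) := by
    refine Prod.ext ?_ ?_
    · funext x
      simp only [Prod.fst_add, Prod.fst_sum, Prod.smul_fst, Pi.add_apply, Finset.sum_apply,
        Pi.smul_apply, smul_eq_mul, dvec, mul_ite, mul_zero, mul_neg, Finset.sum_ite_eq,
        Finset.mem_univ, if_true, Pi.zero_apply, Finset.sum_const_zero, add_zero]
      field_simp
    · funext k x y
      simp only [Prod.snd_add, Prod.snd_sum, Prod.smul_snd, Pi.add_apply, Finset.sum_apply,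
        Pi.smul_apply, smul_eq_mul, dvec, mul_ite, ite_mul, mul_zero, zero_mul,
        Finset.sum_ite_eq, Finset.mem_univ, if_true, Pi.zero_apply, Finset.sum_const_zero,
        zero_add, smul_zero]
      field_simp
      ring
      simp [Finset.sum_ite_eq, Finset.sum_ite_eq']
  rw [hv]
  exact W.add_mem
    (Submodule.sum_mem W fun x₀ _ => W.smul_mem _ (he1 x₀))
    (Submodule.sum_mem W fun k₀ _ => Submodule.sum_mem W fun x₀ _ =>
      Submodule.sum_mem W fun y₀ _ => W.smul_mem _ (hw2 k₀ x₀ y₀))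

/-- for every `m ≥ 1`, `R ≥ 1` and `N > 2R`, the TI-`R` local polytope
`L^{(N,m,R)} ⊆ ℝ^m × (ℝ^{m×m})^R ≅ ℝ^{m+Rm²}` is full-dimensional: its affine span
is the whole space. -/
theorem tiRPolytope_full_dimensional (m R N : ℕ) (hm : 1 ≤ m) (hR : 1 ≤ R)
    (hN : 2 * R < N) :
    affineSpan ℝ (tiRPolytope m R N) = ⊤ := by
  have hN0 : N ≠ 0 := by omega
  haveI : NeZero N := ⟨hN0⟩
  rw [tiRPolytope, affineSpan_convexHull]
  have hset : {v : (Fin m → ℝ) × (Fin R → Fin m → Fin m → ℝ) |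
      ∃ s : ZMod N → (Fin m → Fin 2),
        v = (N : ℝ)⁻¹ • ∑ i ∈ Finset.range N,
          tiRVec m R (fun j => s ((i : ZMod N) + (j : ZMod N)))}
      = {v | ∃ s : ZMod N → (Fin m → Fin 2), v = Pt m R N s} := by
    ext v
    simp only [Set.mem_setOf_eq, gen_eq]
  rw [hset]
  refine le_antisymm le_top ?_
  intro p _
  have hp₀ : Pt m R N (fun _ => baseS m)
      ∈ {v : (Fin m → ℝ) × (Fin R → Fin m → Fin m → ℝ) |
          ∃ s : ZMod N → (Fin m → Fin 2), v = Pt m R N s} := ⟨_, rfl⟩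
  have hdir : p -ᵥ Pt m R N (fun _ => baseS m)
      ∈ (affineSpan ℝ {v : (Fin m → ℝ) × (Fin R → Fin m → Fin m → ℝ) |
          ∃ s : ZMod N → (Fin m → Fin 2), v = Pt m R N s}).direction := by
    rw [direction_affineSpan, span_top m R N hR hN]
    trivial
  have := AffineSubspace.vadd_mem_of_mem_direction hdir (mem_affineSpan ℝ hp₀)
  simpa using this
end

section
/- Let A be a finite nonempty type, I : A × A × A → ℝ, and define F : (A × A) × (A × A) → WithTop ℝ by F((s,t),(t',u)) = I(s,t,u) if t = t' and F((s,t),(t',u)) = ⊤ otherwise. Then for every N ≥ 1, the tropical trace of the N-th tropical power of F is finite and equals the minimum over all functions s : ZMod N → A of Σ_{i ∈ ZMod N} I(s_i, s_{i+1}, s_{i+2}). -/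
/-!
Expanding the trace of `F ^ N` gives a sum over closed walks `d : ZMod N → A × A` of the
products `∏ k, F (d k) (d (k + 1))`. Such a product is the tropical zero `⊤` unless consecutive
pairs overlap, `(d k).2 = (d (k + 1)).1`, and the overlapping walks are exactly
`d k = (s k, s (k + 1))` for `s : ZMod N → A`, whose weight is `Σ k, I (s k, s (k+1), s (k+2))`.
Tropically the remaining sum over `s` is the minimum.
-/

open Tropical Finset

/-- The matrix `F` over the min-plus semiring associated to a tripartite function
`I : A × A × A → ℝ`: the entry at `((s,t),(t',u))` is `I (s,t,u)` when `t = t'` and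
the tropical zero `⊤` otherwise. -/
noncomputable def tripartiteTropMatrix {A : Type*} [DecidableEq A] (I : A × A × A → ℝ) :
    Matrix (A × A) (A × A) (Tropical (WithTop ℝ)) :=
  Matrix.of fun p q =>
    if p.2 = q.1 then Tropical.trop ((I (p.1, p.2, q.2) : ℝ) : WithTop ℝ)
    else Tropical.trop (⊤ : WithTop ℝ)

namespace Matrix

section Walks

variable {ι R : Type*} [Fintype ι] [DecidableEq ι] [CommSemiring R]

-- `Fin.cons i p` lists the vertices `0, …, n` of the walk and `Fin.snoc p j` its vertices
-- `1, …, n + 1`, so factor `k` is the edge from vertex `k` to vertex `k + 1`.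
theorem pow_succ_apply_eq_sum_prod (M : Matrix ι ι R) (n : ℕ) (i j : ι) :
    (M ^ (n + 1)) i j = ∑ p : Fin n → ι, ∏ k,
      M ((Fin.cons i p : Fin (n + 1) → ι) k) ((Fin.snoc p j : Fin (n + 1) → ι) k) := by
  induction n generalizing j with
  | zero => simp [Fin.snoc]
  | succ n ih =>
    rw [pow_succ, mul_apply, ← (Fin.snocEquiv fun _ => ι).sum_comp, Fintype.sum_prod_type]
    refine sum_congr rfl fun x _ => ?_
    simp only [ih, sum_mul, Fin.prod_univ_castSucc (n := n + 1)]
    refine sum_congr rfl fun p _ => ?_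
    simp [Fin.snocEquiv, Fin.cons_snoc_eq_snoc_cons]

theorem trace_pow_eq_sum_prod_zmod (M : Matrix ι ι R) (N : ℕ) [NeZero N] :
    (M ^ N).trace = ∑ d : ZMod N → ι, ∏ k, M (d k) (d (k + 1)) := by
  obtain ⟨n, rfl⟩ := Nat.exists_eq_succ_of_ne_zero (NeZero.ne N)
  change _ = ∑ d : Fin (n + 1) → ι, ∏ k, M (d k) (d (k + 1))
  rw [← (Fin.consEquiv fun _ => ι).sum_comp, Fintype.sum_prod_type]
  refine sum_congr rfl fun i _ => ?_
  rw [diag_apply, pow_succ_apply_eq_sum_prod]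
  refine sum_congr rfl fun p _ => prod_congr rfl fun k _ => ?_
  simp [Fin.consEquiv, Fin.snoc_eq_cons_rotate]

end Walks

theorem sum_prod_pairs_eq_sum_prod_of_apply_eq_zero {K A R : Type*} [Fintype K] [DecidableEq K]
    [Fintype A] [CommSemiring R] (σ : K → K) (F : Matrix (A × A) (A × A) R)
    (hF : ∀ p q, p.2 ≠ q.1 → F p q = 0) :
    ∑ d : K → A × A, ∏ k, F (d k) (d (σ k))
      = ∑ s : K → A, ∏ k, F (s k, s (σ k)) (s (σ k), s (σ (σ k))) := by
  refine (Fintype.sum_of_injective (fun (s : K → A) k => (s k, s (σ k)))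
    (fun s s' h => funext fun k => congr_arg Prod.fst (congr_fun h k)) _ _ ?_ fun _ => rfl).symm
  intro d hd
  have ⟨k, hk⟩ : ∃ k, (d k).2 ≠ (d (σ k)).1 := by
    by_contra! h
    exact hd ⟨fun k => (d k).1, funext fun k => Prod.ext rfl (h k).symm⟩
  exact prod_eq_zero (mem_univ k) (hF _ _ hk)

end Matrix

section tripartiteTropMatrix

variable {A : Type*} [DecidableEq A] (I : A × A × A → ℝ)

theorem tripartiteTropMatrix_apply_of_ne {p q : A × A} (h : p.2 ≠ q.1) :
    tripartiteTropMatrix I p q = 0 := by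
  simp [tripartiteTropMatrix, h]

theorem tripartiteTropMatrix_apply_pair (a b c : A) :
    tripartiteTropMatrix I (a, b) (b, c) = trop (I (a, b, c) : WithTop ℝ) := by
  simp [tripartiteTropMatrix]

end tripartiteTropMatrix

/-- for every `N ≥ 1`, the tropical trace of the `N`-th tropical power
of `F` is finite and equals the minimum over all `s : ZMod N → A` of
`Σ_i I (s i, s (i+1), s (i+2))`. -/
theorem trace_pow_tripartiteTropMatrix {A : Type*} [Fintype A] [DecidableEq A]
    [Nonempty A] (I : A × A × A → ℝ) (N : ℕ) [NeZero N] :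
    Matrix.trace (tripartiteTropMatrix I ^ N)
      = Tropical.trop
          ((Finset.univ.inf' Finset.univ_nonempty
              (fun s : ZMod N → A =>
                ∑ i : ZMod N, I (s i, s (i + 1), s (i + 2))) : ℝ) : WithTop ℝ) := by
  rw [Matrix.trace_pow_eq_sum_prod_zmod,
    Matrix.sum_prod_pairs_eq_sum_prod_of_apply_eq_zero _ _
      fun _ _ => tripartiteTropMatrix_apply_of_ne I,
    coe_inf', Finset.trop_inf]
  refine sum_congr rfl fun s _ => ?_
  simp only [tripartiteTropMatrix_apply_pair, Function.comp_apply, WithTop.coe_sum, trop_sum,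
    add_assoc, one_add_one_eq_two]
end
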